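/- arXiv:1903.03781 — 7 statements merged into one kernel-verified Lean document; each statement's English description precedes it below -/
import Mathlib

section
/- Let D = {(r,t) ∈ ℝ² : r > 0} and let μ, ω : D → ℝ be C² functions satisfying on D the system ω_tt − ω_rr + ω_r/r = 4(μ_r ω_r − μ_t ω_t) and μ_tt − μ_rr − μ_r/r = (e^{4μ}/(2r²))(ω_t² − ω_r²). Define F(r,t) = r(μ_t² + μ_r²) + (e^{4μ}/(4r))(ω_t² + ω_r²) and G(r,t) = 2r μ_t μ_r + (1/(2r)) e^{4μ} ω_r ω_t. Then ∂F/∂t − ∂G/∂r = 0 at every point of D, i.e. the differential form F dr + G dt is closed (hence exact on the simply connected domain D). -/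
/-- Partial derivative with respect to the first variable `r`. -/
noncomputable def pr (f : ℝ → ℝ → ℝ) (r t : ℝ) : ℝ := deriv (fun x => f x t) r

/-- Partial derivative with respect to the second variable `t`. -/
noncomputable def pt (f : ℝ → ℝ → ℝ) (r t : ℝ) : ℝ := deriv (fun x => f r x) t

/-!
Expanding the derivatives and cancelling the mixed partials (Schwarz) gives, for arbitrary `C²`
functions `μ, ω` and `r ≠ 0`, the identity
`F_t - G_r = 2 r μ_t · E_μ + (e^{4μ} / (2r)) ω_t · E_ω`,
where `E_μ` and `E_ω` are the differences of the two sides of the `μ`- and `ω`-equations.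
Hence `F_t - G_r` vanishes wherever the field equations hold.
-/

open Filter Topology Function

section Partials

variable {f : ℝ → ℝ → ℝ} {r t : ℝ}

theorem hasDerivAt_fderiv_fst (h : DifferentiableAt ℝ (uncurry f) (r, t)) :
    HasDerivAt (fun x => f x t) (fderiv ℝ (uncurry f) (r, t) (1, 0)) r := by
  exact h.hasFDerivAt.comp_hasDerivAt r ((hasDerivAt_id r).prodMk (hasDerivAt_const r t))

theorem hasDerivAt_fderiv_snd (h : DifferentiableAt ℝ (uncurry f) (r, t)) :
    HasDerivAt (fun s => f r s) (fderiv ℝ (uncurry f) (r, t) (0, 1)) t := by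
  exact h.hasFDerivAt.comp_hasDerivAt t ((hasDerivAt_const t r).prodMk (hasDerivAt_id t))

theorem pr_eq_fderiv (h : DifferentiableAt ℝ (uncurry f) (r, t)) :
    pr f r t = fderiv ℝ (uncurry f) (r, t) (1, 0) :=
  (hasDerivAt_fderiv_fst h).deriv

theorem pt_eq_fderiv (h : DifferentiableAt ℝ (uncurry f) (r, t)) :
    pt f r t = fderiv ℝ (uncurry f) (r, t) (0, 1) :=
  (hasDerivAt_fderiv_snd h).deriv

theorem hasDerivAt_pr (h : DifferentiableAt ℝ (uncurry f) (r, t)) :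
    HasDerivAt (fun x => f x t) (pr f r t) r :=
  (hasDerivAt_fderiv_fst h).differentiableAt.hasDerivAt

theorem hasDerivAt_pt (h : DifferentiableAt ℝ (uncurry f) (r, t)) :
    HasDerivAt (fun s => f r s) (pt f r t) t :=
  (hasDerivAt_fderiv_snd h).differentiableAt.hasDerivAt

theorem hasFDerivAt_fderiv_apply {g : ℝ × ℝ → ℝ} {p : ℝ × ℝ} (h : ContDiffAt ℝ 2 g p)
    (v : ℝ × ℝ) :
    HasFDerivAt (fun q => fderiv ℝ g q v)
      ((ContinuousLinearMap.apply ℝ ℝ v).comp (fderiv ℝ (fderiv ℝ g) p)) p :=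
  (ContinuousLinearMap.apply ℝ ℝ v).hasFDerivAt.comp p
    ((h.fderiv_right (by norm_num)).differentiableAt one_ne_zero).hasFDerivAt

theorem uncurry_pr_eventuallyEq (h : ContDiffAt ℝ 2 (uncurry f) (r, t)) :
    uncurry (pr f) =ᶠ[𝓝 (r, t)] fun q => fderiv ℝ (uncurry f) q (1, 0) := by
  filter_upwards [h.eventually (by simp)] with ⟨x, s⟩ hq
  exact pr_eq_fderiv (hq.differentiableAt (by simp))

theorem uncurry_pt_eventuallyEq (h : ContDiffAt ℝ 2 (uncurry f) (r, t)) :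
    uncurry (pt f) =ᶠ[𝓝 (r, t)] fun q => fderiv ℝ (uncurry f) q (0, 1) := by
  filter_upwards [h.eventually (by simp)] with ⟨x, s⟩ hq
  exact pt_eq_fderiv (hq.differentiableAt (by simp))

theorem hasFDerivAt_uncurry_pr (h : ContDiffAt ℝ 2 (uncurry f) (r, t)) :
    HasFDerivAt (uncurry (pr f))
      ((ContinuousLinearMap.apply ℝ ℝ (1, 0)).comp (fderiv ℝ (fderiv ℝ (uncurry f)) (r, t)))
      (r, t) :=
  (hasFDerivAt_fderiv_apply h _).congr_of_eventuallyEq (uncurry_pr_eventuallyEq h)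

theorem hasFDerivAt_uncurry_pt (h : ContDiffAt ℝ 2 (uncurry f) (r, t)) :
    HasFDerivAt (uncurry (pt f))
      ((ContinuousLinearMap.apply ℝ ℝ (0, 1)).comp (fderiv ℝ (fderiv ℝ (uncurry f)) (r, t)))
      (r, t) :=
  (hasFDerivAt_fderiv_apply h _).congr_of_eventuallyEq (uncurry_pt_eventuallyEq h)

theorem pt_pr_eq_pr_pt (h : ContDiffAt ℝ 2 (uncurry f) (r, t)) :
    pt (pr f) r t = pr (pt f) r t := by
  rw [pt_eq_fderiv (hasFDerivAt_uncurry_pr h).differentiableAt, (hasFDerivAt_uncurry_pr h).fderiv,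
    pr_eq_fderiv (hasFDerivAt_uncurry_pt h).differentiableAt, (hasFDerivAt_uncurry_pt h).fderiv]
  exact h.isSymmSndFDerivAt (by simp) _ _

end Partials

noncomputable def nuFormDr (μ ω : ℝ → ℝ → ℝ) (r t : ℝ) : ℝ :=
  r * ((pt μ r t) ^ 2 + (pr μ r t) ^ 2)
    + Real.exp (4 * μ r t) / (4 * r) * ((pt ω r t) ^ 2 + (pr ω r t) ^ 2)

noncomputable def nuFormDt (μ ω : ℝ → ℝ → ℝ) (r t : ℝ) : ℝ :=
  2 * r * pt μ r t * pr μ r t + 1 / (2 * r) * Real.exp (4 * μ r t) * pr ω r t * pt ω r t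

section NuForm

variable {μ ω : ℝ → ℝ → ℝ} {r t : ℝ}

theorem pt_nuFormDr (hμ : ContDiffAt ℝ 2 (uncurry μ) (r, t))
    (hω : ContDiffAt ℝ 2 (uncurry ω) (r, t)) :
    pt (nuFormDr μ ω) r t
      = 2 * r * (pt μ r t * pt (pt μ) r t + pr μ r t * pt (pr μ) r t)
        + Real.exp (4 * μ r t) / r * pt μ r t * ((pt ω r t) ^ 2 + (pr ω r t) ^ 2)
        + Real.exp (4 * μ r t) / (2 * r)
          * (pt ω r t * pt (pt ω) r t + pr ω r t * pt (pr ω) r t) := by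
  have hexp := ((hasDerivAt_pt (hμ.differentiableAt (by simp))).const_mul 4).exp
  have hF := ((((hasDerivAt_pt (hasFDerivAt_uncurry_pt hμ).differentiableAt).pow 2).add
      ((hasDerivAt_pt (hasFDerivAt_uncurry_pr hμ).differentiableAt).pow 2)).const_mul r).add
    ((hexp.div_const (4 * r)).mul
      (((hasDerivAt_pt (hasFDerivAt_uncurry_pt hω).differentiableAt).pow 2).add
        ((hasDerivAt_pt (hasFDerivAt_uncurry_pr hω).differentiableAt).pow 2)))
  refine hF.deriv.trans ?_
  simp only [Pi.add_apply, Pi.pow_apply]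
  ring

theorem pr_nuFormDt (hμ : ContDiffAt ℝ 2 (uncurry μ) (r, t))
    (hω : ContDiffAt ℝ 2 (uncurry ω) (r, t)) (hr : r ≠ 0) :
    pr (nuFormDt μ ω) r t
      = 2 * pt μ r t * pr μ r t + 2 * r * (pr (pt μ) r t * pr μ r t + pt μ r t * pr (pr μ) r t)
        + Real.exp (4 * μ r t) / (2 * r)
          * ((4 * pr μ r t - 1 / r) * pr ω r t * pt ω r t
            + pr (pr ω) r t * pt ω r t + pr ω r t * pr (pt ω) r t) := by
  have hlin : HasDerivAt (fun x : ℝ => 2 * x) 2 r := by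
    simpa using (hasDerivAt_id r).const_mul 2
  have hinv := (hasDerivAt_const r (1 : ℝ)).div hlin (by simpa using hr)
  have hexp := ((hasDerivAt_pr (hμ.differentiableAt (by simp))).const_mul 4).exp
  have hG := ((hlin.mul (hasDerivAt_pr (hasFDerivAt_uncurry_pt hμ).differentiableAt)).mul
      (hasDerivAt_pr (hasFDerivAt_uncurry_pr hμ).differentiableAt)).add
    (((hinv.mul hexp).mul (hasDerivAt_pr (hasFDerivAt_uncurry_pr hω).differentiableAt)).mul
      (hasDerivAt_pr (hasFDerivAt_uncurry_pt hω).differentiableAt))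
  refine hG.deriv.trans ?_
  simp only [Pi.mul_apply, Pi.div_apply]
  field_simp
  ring

theorem pt_nuFormDr_sub_pr_nuFormDt (hμ : ContDiffAt ℝ 2 (uncurry μ) (r, t))
    (hω : ContDiffAt ℝ 2 (uncurry ω) (r, t)) (hr : r ≠ 0) :
    pt (nuFormDr μ ω) r t - pr (nuFormDt μ ω) r t
      = 2 * r * pt μ r t
          * ((pt (pt μ) r t - pr (pr μ) r t - pr μ r t / r)
            - Real.exp (4 * μ r t) / (2 * r ^ 2) * ((pt ω r t) ^ 2 - (pr ω r t) ^ 2))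
        + Real.exp (4 * μ r t) / (2 * r) * pt ω r t
          * ((pt (pt ω) r t - pr (pr ω) r t + pr ω r t / r)
            - 4 * (pr μ r t * pr ω r t - pt μ r t * pt ω r t)) := by
  rw [pt_nuFormDr hμ hω, pr_nuFormDt hμ hω hr, pt_pr_eq_pr_pt hμ, pt_pr_eq_pr_pt hω]
  field_simp
  ring

end NuForm

/-- If `(μ, ω)` is a `C²` solution of the Einstein–Rosen field system on
`D = {(r,t) : r > 0}`, then the differential form `F dr + G dt` with
`F = r(μ_t² + μ_r²) + (e^{4μ}/(4r))(ω_t² + ω_r²)` and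
`G = 2r μ_t μ_r + (1/(2r)) e^{4μ} ω_r ω_t` is closed, i.e. `F_t - G_r = 0` on `D`. -/
theorem closedness_of_nu_form (μ ω : ℝ → ℝ → ℝ)
    (hμ : ContDiffOn ℝ 2 (fun p : ℝ × ℝ => μ p.1 p.2) {p : ℝ × ℝ | 0 < p.1})
    (hω : ContDiffOn ℝ 2 (fun p : ℝ × ℝ => ω p.1 p.2) {p : ℝ × ℝ | 0 < p.1})
    (heq1 : ∀ r t : ℝ, 0 < r →
      pt (pt ω) r t - pr (pr ω) r t + pr ω r t / r
        = 4 * (pr μ r t * pr ω r t - pt μ r t * pt ω r t))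
    (heq2 : ∀ r t : ℝ, 0 < r →
      pt (pt μ) r t - pr (pr μ) r t - pr μ r t / r
        = Real.exp (4 * μ r t) / (2 * r ^ 2) * ((pt ω r t) ^ 2 - (pr ω r t) ^ 2)) :
    ∀ r t : ℝ, 0 < r →
      pt (fun x s => x * ((pt μ x s) ^ 2 + (pr μ x s) ^ 2)
          + Real.exp (4 * μ x s) / (4 * x) * ((pt ω x s) ^ 2 + (pr ω x s) ^ 2)) r t
      - pr (fun x s => 2 * x * pt μ x s * pr μ x s
          + 1 / (2 * x) * Real.exp (4 * μ x s) * pr ω x s * pt ω x s) r t = 0 := by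
  intro r t hr
  have hD : {p : ℝ × ℝ | 0 < p.1} ∈ 𝓝 (r, t) :=
    (isOpen_lt continuous_const continuous_fst).mem_nhds hr
  refine (pt_nuFormDr_sub_pr_nuFormDt (hμ.contDiffAt hD) (hω.contDiffAt hD) hr.ne').trans ?_
  rw [sub_eq_zero.mpr (heq1 r t hr), sub_eq_zero.mpr (heq2 r t hr)]
  ring
end

section
/- Let γ ∈ ℝ, let I ⊆ ℝ be an open interval, and let Ψ : I → ℝ be a C¹ function satisfying the ordinary differential equation Ψ'(x) = (x + γ) e^{2Ψ(x)} for all x ∈ I. Let D = {(r,t) ∈ ℝ² : r > 0} and let φ : D → ℝ be a C² function with values in I satisfying on D the equation ∂/∂r(r e^{2Ψ(φ)} φ_r) − ∂/∂t(r e^{2Ψ(φ)} φ_t) = 0. Then the function ψ = Ψ ∘ φ satisfies on D the equation ∂/∂r(r(ψ_r − φ e^{2ψ} φ_r)) − ∂/∂t(r(ψ_t − φ e^{2ψ} φ_t)) = 0. -/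
open Real

section PartialDerivatives

variable {f : ℝ → ℝ → ℝ} {U : Set (ℝ × ℝ)} {r t : ℝ}

lemma differentiableAt_fst_section (hf : DifferentiableOn ℝ (fun p : ℝ × ℝ => f p.1 p.2) U)
    (hU : IsOpen U) (h : (r, t) ∈ U) : DifferentiableAt ℝ (fun x => f x t) r :=
  (hf.differentiableAt (hU.mem_nhds h)).comp (f := fun x => (x, t)) r
    (differentiableAt_id.prodMk (differentiableAt_const t))

lemma differentiableAt_snd_section (hf : DifferentiableOn ℝ (fun p : ℝ × ℝ => f p.1 p.2) U)
    (hU : IsOpen U) (h : (r, t) ∈ U) : DifferentiableAt ℝ (fun s => f r s) t :=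
  (hf.differentiableAt (hU.mem_nhds h)).comp (f := fun s => (r, s)) t
    ((differentiableAt_const r).prodMk differentiableAt_id)

lemma pr_comp {g : ℝ → ℝ} (hg : DifferentiableAt ℝ g (f r t))
    (hf : DifferentiableAt ℝ (fun x => f x t) r) :
    pr (fun x s => g (f x s)) r t = deriv g (f r t) * pr f r t :=
  deriv_comp (h₂ := g) r hg hf

lemma pt_comp {g : ℝ → ℝ} (hg : DifferentiableAt ℝ g (f r t))
    (hf : DifferentiableAt ℝ (fun s => f r s) t) :
    pt (fun x s => g (f x s)) r t = deriv g (f r t) * pt f r t :=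
  deriv_comp (h₂ := g) t hg hf

variable {F G : ℝ → ℝ → ℝ} {c : ℝ}

lemma pr_eq_const_mul_of_eqOn (hU : IsOpen U) (hFG : ∀ x s, (x, s) ∈ U → F x s = c * G x s)
    (h : (r, t) ∈ U) : pr F r t = c * pr G r t := by
  have hnhds : ∀ᶠ x in nhds r, (x, t) ∈ U :=
    (continuous_id.prodMk continuous_const).continuousAt.preimage_mem_nhds (hU.mem_nhds h)
  have hev : (fun x => F x t) =ᶠ[nhds r] fun x => c * G x t :=
    hnhds.mono fun x hx => hFG x t hx
  exact hev.deriv_eq.trans (deriv_const_mul_field c)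

lemma pt_eq_const_mul_of_eqOn (hU : IsOpen U) (hFG : ∀ x s, (x, s) ∈ U → F x s = c * G x s)
    (h : (r, t) ∈ U) : pt F r t = c * pt G r t := by
  have hnhds : ∀ᶠ s in nhds t, (r, s) ∈ U :=
    (continuous_const.prodMk continuous_id).continuousAt.preimage_mem_nhds (hU.mem_nhds h)
  have hev : (fun s => F r s) =ᶠ[nhds t] fun s => c * G r s :=
    hnhds.mono fun s hs => hFG r s hs
  exact hev.deriv_eq.trans (deriv_const_mul_field c)

end PartialDerivatives

section Ansatz

variable {γ : ℝ} {I : Set ℝ} {Ψ : ℝ → ℝ} {φ : ℝ → ℝ → ℝ} {U : Set (ℝ × ℝ)}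

/- The ODE says exactly `Ψ'(φ) - φ e^{2Ψ(φ)} = γ e^{2Ψ(φ)}`, so by the chain rule the flux of the
`ψ`-equation is `γ` times the flux of the `φ`-equation. -/
lemma flux_r_eq_const_mul (hI : IsOpen I) (hΨ : DifferentiableOn ℝ Ψ I)
    (hODE : ∀ x ∈ I, deriv Ψ x = (x + γ) * exp (2 * Ψ x))
    (hU : IsOpen U) (hφ : DifferentiableOn ℝ (fun p : ℝ × ℝ => φ p.1 p.2) U)
    (hrange : ∀ x s, (x, s) ∈ U → φ x s ∈ I) (x s : ℝ) (h : (x, s) ∈ U) :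
    x * (pr (fun y u => Ψ (φ y u)) x s - φ x s * exp (2 * Ψ (φ x s)) * pr φ x s)
      = γ * (x * exp (2 * Ψ (φ x s)) * pr φ x s) := by
  have hmem := hrange x s h
  rw [pr_comp (hΨ.differentiableAt (hI.mem_nhds hmem)) (differentiableAt_fst_section hφ hU h),
    hODE _ hmem]
  ring

lemma flux_t_eq_const_mul (hI : IsOpen I) (hΨ : DifferentiableOn ℝ Ψ I)
    (hODE : ∀ x ∈ I, deriv Ψ x = (x + γ) * exp (2 * Ψ x))
    (hU : IsOpen U) (hφ : DifferentiableOn ℝ (fun p : ℝ × ℝ => φ p.1 p.2) U)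
    (hrange : ∀ x s, (x, s) ∈ U → φ x s ∈ I) (x s : ℝ) (h : (x, s) ∈ U) :
    x * (pt (fun y u => Ψ (φ y u)) x s - φ x s * exp (2 * Ψ (φ x s)) * pt φ x s)
      = γ * (x * exp (2 * Ψ (φ x s)) * pt φ x s) := by
  have hmem := hrange x s h
  rw [pt_comp (hΨ.differentiableAt (hI.mem_nhds hmem)) (differentiableAt_snd_section hφ hU h),
    hODE _ hmem]
  ring

end Ansatz

theorem functional_relation_ansatz_general (γ : ℝ) (I : Set ℝ) (hIopen : IsOpen I)
    (Ψ : ℝ → ℝ)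
    (hΨ : ContDiffOn ℝ 1 Ψ I)
    (hODE : ∀ x ∈ I, deriv Ψ x = (x + γ) * Real.exp (2 * Ψ x))
    (φ : ℝ → ℝ → ℝ)
    (hφ : ContDiffOn ℝ 2 (fun p : ℝ × ℝ => φ p.1 p.2) {p : ℝ × ℝ | 0 < p.1})
    (hrange : ∀ r t : ℝ, 0 < r → φ r t ∈ I)
    (heq : ∀ r t : ℝ, 0 < r →
      pr (fun x s => x * Real.exp (2 * Ψ (φ x s)) * pr φ x s) r t
        - pt (fun x s => x * Real.exp (2 * Ψ (φ x s)) * pt φ x s) r t = 0) :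
    ∀ r t : ℝ, 0 < r →
      pr (fun x s => x * (pr (fun y u => Ψ (φ y u)) x s
            - φ x s * Real.exp (2 * Ψ (φ x s)) * pr φ x s)) r t
        - pt (fun x s => x * (pt (fun y u => Ψ (φ y u)) x s
            - φ x s * Real.exp (2 * Ψ (φ x s)) * pt φ x s)) r t = 0 := by
  have hD : IsOpen {p : ℝ × ℝ | 0 < p.1} := isOpen_lt continuous_const continuous_fst
  have hΨd := hΨ.differentiableOn one_ne_zero
  have hφd := hφ.differentiableOn two_ne_zero
  intro r t hr
  rw [pr_eq_const_mul_of_eqOn hD (flux_r_eq_const_mul hIopen hΨd hODE hD hφd hrange) hr,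
    pt_eq_const_mul_of_eqOn hD (flux_t_eq_const_mul hIopen hΨd hODE hD hφd hrange) hr,
    ← mul_sub, heq r t hr, mul_zero]

/-- The functional-relation ansatz: if `Ψ` is a `C¹` solution of the ODE
`Ψ'(x) = (x + γ) e^{2Ψ(x)}` on an open interval `I`, and `φ` is a `C²`
solution, with values in `I`, of `(r e^{2Ψ(φ)} φ_r)_r − (r e^{2Ψ(φ)} φ_t)_t = 0`
on `D = {r > 0}`, then `ψ = Ψ ∘ φ` satisfies
`(r(ψ_r − φ e^{2ψ} φ_r))_r − (r(ψ_t − φ e^{2ψ} φ_t))_t = 0` on `D`. -/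
theorem functional_relation_ansatz (γ : ℝ) (I : Set ℝ) (hIopen : IsOpen I)
    (hIinterval : I.OrdConnected) (Ψ : ℝ → ℝ)
    (hΨ : ContDiffOn ℝ 1 Ψ I)
    (hODE : ∀ x ∈ I, deriv Ψ x = (x + γ) * Real.exp (2 * Ψ x))
    (φ : ℝ → ℝ → ℝ)
    (hφ : ContDiffOn ℝ 2 (fun p : ℝ × ℝ => φ p.1 p.2) {p : ℝ × ℝ | 0 < p.1})
    (hrange : ∀ r t : ℝ, 0 < r → φ r t ∈ I)
    (heq : ∀ r t : ℝ, 0 < r →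
      pr (fun x s => x * Real.exp (2 * Ψ (φ x s)) * pr φ x s) r t
        - pt (fun x s => x * Real.exp (2 * Ψ (φ x s)) * pt φ x s) r t = 0) :
    ∀ r t : ℝ, 0 < r →
      pr (fun x s => x * (pr (fun y u => Ψ (φ y u)) x s
            - φ x s * Real.exp (2 * Ψ (φ x s)) * pr φ x s)) r t
        - pt (fun x s => x * (pt (fun y u => Ψ (φ y u)) x s
            - φ x s * Real.exp (2 * Ψ (φ x s)) * pt φ x s)) r t = 0 :=
  functional_relation_ansatz_general γ I hIopen Ψ hΨ hODE φ hφ hrange heq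
end

section
/- Let γ, C ∈ ℝ with C < γ², let D = {(r,t) ∈ ℝ² : r > 0}, and let θ : D → ℝ be a C² function satisfying the cylindrical wave equation (1/r)(r θ_r)_r − θ_tt = 0 on D. Define φ : D → ℝ by φ(r,t) = ((√(γ² − C) − γ) e^{2√(γ² − C) θ(r,t)} − (√(γ² − C) + γ))/(e^{2√(γ² − C) θ(r,t)} + 1). Then for every (r,t) ∈ D one has φ(r,t)² + 2γφ(r,t) + C < 0, so that ψ : D → ℝ given by ψ(r,t) = −(1/2) log(−(φ(r,t)² + 2γφ(r,t) + C)) is well defined, and the pair (ψ, φ) satisfies on D the Einstein–Rosen system ψ_tt − (1/r)(r ψ_r)_r = e^{2ψ}(φ_t² − φ_r²) and (e^{2ψ} φ_t)_t − (1/r)(r e^{2ψ} φ_r)_r = 0. -/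
/-!
With `k = √(γ² - C)` the formula for `φ` reads `φ = k tanh (k θ) - γ`, so
`φ² + 2γφ + C = -(k / cosh (k θ))² < 0` and `ψ = log cosh (k θ) - log k`. Thus `ψ = L ∘ θ` and
`φ = F ∘ θ` for profiles with `F' = L''` and `e^{2L} F' = 1`. The cylindrical wave operator `□`
obeys the chain rule `□ (L ∘ θ) = L''(θ) (θ_t² - θ_r²) + L'(θ) □θ`, which together with `□θ = 0`
turns the first Einstein–Rosen equation into `F' = e^{2L} F'²`; and `e^{2ψ} ∇φ = ∇θ`, which turns
the second one into the wave equation for `θ`.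
-/

open Real Filter Topology

namespace Real

theorem hasDerivAt_tanh (x : ℝ) : HasDerivAt tanh (1 / cosh x ^ 2) x := by
  have h := (hasDerivAt_sinh x).div (hasDerivAt_cosh x) (cosh_pos x).ne'
  rw [show sinh / cosh = tanh from funext fun y => (tanh_eq_sinh_div_cosh y).symm] at h
  refine h.congr_deriv ?_
  rw [← cosh_sq_sub_sinh_sq x]
  ring

theorem tanh_eq_exp_two_mul (x : ℝ) : tanh x = (exp (2 * x) - 1) / (exp (2 * x) + 1) := by
  rw [tanh_eq, exp_neg, two_mul, exp_add]
  have := exp_pos x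
  field_simp

theorem one_sub_tanh_sq (x : ℝ) : 1 - tanh x ^ 2 = 1 / cosh x ^ 2 := by
  have hc := (cosh_pos x).ne'
  rw [tanh_eq_sinh_div_cosh]
  field_simp
  linear_combination cosh_sq_sub_sinh_sq x

theorem hasDerivAt_log_cosh_mul (k x : ℝ) :
    HasDerivAt (fun y => log (cosh (k * y))) (k * tanh (k * x)) x := by
  have h := (((hasDerivAt_id' x).const_mul k).cosh).log (cosh_pos _).ne'
  refine h.congr_deriv ?_
  rw [tanh_eq_sinh_div_cosh]
  ring

theorem hasDerivAt_mul_tanh_mul (k x : ℝ) :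
    HasDerivAt (fun y => k * tanh (k * y)) (k ^ 2 / cosh (k * x) ^ 2) x := by
  have h := ((hasDerivAt_tanh (k * x)).comp x ((hasDerivAt_id' x).const_mul k)).const_mul k
  refine h.congr_deriv ?_
  ring

end Real

theorem exp_two_mul_log_sub_log {a k : ℝ} (ha : 0 < a) (hk : 0 < k) :
    exp (2 * (log a - log k)) = (a / k) ^ 2 := by
  rw [← log_div ha.ne' hk.ne', two_mul, exp_add, exp_log (div_pos ha hk), sq]

theorem deriv_comp_of_hasDerivAt {F g : ℝ → ℝ} {F' x : ℝ} (hF : HasDerivAt F F' (g x))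
    (hg : DifferentiableAt ℝ g x) : deriv (fun y => F (g y)) x = F' * deriv g x :=
  (hF.comp x hg.hasDerivAt).deriv

theorem deriv_mul_deriv_comp {F F' F'' w g : ℝ → ℝ} {x : ℝ}
    (hF : ∀ y, HasDerivAt F (F' y) y) (hF' : ∀ y, HasDerivAt F' (F'' y) y)
    (hg : ∀ᶠ y in 𝓝 x, DifferentiableAt ℝ g y)
    (hwg : DifferentiableAt ℝ (fun y => w y * deriv g y) x) :
    deriv (fun y => w y * deriv (fun y => F (g y)) y) x
      = F'' (g x) * deriv g x * (w x * deriv g x)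
        + F' (g x) * deriv (fun y => w y * deriv g y) x := by
  have hchain : (fun y => w y * deriv (fun y => F (g y)) y)
      =ᶠ[𝓝 x] fun y => F' (g y) * (w y * deriv g y) :=
    hg.mono fun y hy => by
      beta_reduce
      rw [deriv_comp_of_hasDerivAt (hF _) hy]
      ring
  have hF'g : HasDerivAt (fun y => F' (g y)) (F'' (g x) * deriv g x) x :=
    (hF' (g x)).comp x hg.self_of_nhds.hasDerivAt
  rw [hchain.deriv_eq]
  exact (hF'g.mul hwg.hasDerivAt).deriv

section

variable {𝕜 E : Type*} [NontriviallyNormedField 𝕜] [NormedAddCommGroup E] [NormedSpace 𝕜 E]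
  {g : 𝕜 → E} {x : 𝕜}

theorem ContDiffAt.eventually_differentiableAt (hg : ContDiffAt 𝕜 2 g x) :
    ∀ᶠ y in 𝓝 x, DifferentiableAt 𝕜 g y :=
  (hg.eventually (by simp)).mono fun _ hy => hy.differentiableAt (by simp)

theorem ContDiffAt.differentiableAt_deriv (hg : ContDiffAt 𝕜 2 g x) :
    DifferentiableAt 𝕜 (deriv g) x :=
  (hg.derivWithin (m := 1) (by norm_num)).differentiableAt one_ne_zero

end

theorem ContDiffAt.slices {f : ℝ → ℝ → ℝ} {n : WithTop ℕ∞} {r t : ℝ}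
    (h : ContDiffAt ℝ n (fun p : ℝ × ℝ => f p.1 p.2) (r, t)) :
    ContDiffAt ℝ n (fun s => f r s) t ∧ ContDiffAt ℝ n (fun x => f x t) r :=
  ⟨h.comp t (contDiffAt_const.prodMk contDiffAt_id),
    h.comp r (contDiffAt_id.prodMk contDiffAt_const)⟩

noncomputable def cylindricalWave (f : ℝ → ℝ → ℝ) (r t : ℝ) : ℝ :=
  pt (pt f) r t - pr (fun x s => x * pr f x s) r t / r

theorem pt_comp_s11 {F F' : ℝ → ℝ} (hF : ∀ y, HasDerivAt F (F' y) y) {θ : ℝ → ℝ → ℝ} {r t : ℝ}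
    (hθ : DifferentiableAt ℝ (fun s => θ r s) t) :
    pt (fun x s => F (θ x s)) r t = F' (θ r t) * pt θ r t :=
  deriv_comp_of_hasDerivAt (hF _) hθ

theorem pr_comp_s11 {F F' : ℝ → ℝ} (hF : ∀ y, HasDerivAt F (F' y) y) {θ : ℝ → ℝ → ℝ} {r t : ℝ}
    (hθ : DifferentiableAt ℝ (fun x => θ x t) r) :
    pr (fun x s => F (θ x s)) r t = F' (θ r t) * pr θ r t :=
  deriv_comp_of_hasDerivAt (hF _) hθ

theorem cylindricalWave_comp {F F' F'' : ℝ → ℝ} (hF : ∀ y, HasDerivAt F (F' y) y)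
    (hF' : ∀ y, HasDerivAt F' (F'' y) y) {θ : ℝ → ℝ → ℝ} {r t : ℝ} (hr : r ≠ 0)
    (hθt : ContDiffAt ℝ 2 (fun s => θ r s) t) (hθr : ContDiffAt ℝ 2 (fun x => θ x t) r) :
    cylindricalWave (fun x s => F (θ x s)) r t
      = F'' (θ r t) * (pt θ r t ^ 2 - pr θ r t ^ 2) + F' (θ r t) * cylindricalWave θ r t := by
  have htt := deriv_mul_deriv_comp (w := fun _ => 1) hF hF' hθt.eventually_differentiableAt
    (by simpa using hθt.differentiableAt_deriv)
  have hrr := deriv_mul_deriv_comp (w := fun x => x) hF hF' hθr.eventually_differentiableAt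
    (differentiableAt_id.mul hθr.differentiableAt_deriv)
  simp only [one_mul] at htt
  simp only [cylindricalWave, pt, pr]
  rw [htt, hrr]
  field_simp
  ring

theorem weighted_divergence_comp {F F' G : ℝ → ℝ} (hF : ∀ y, HasDerivAt F (F' y) y)
    (hGF : ∀ y, G y * F' y = 1) {θ : ℝ → ℝ → ℝ} {r t : ℝ}
    (hθt : ∀ᶠ s in 𝓝 t, DifferentiableAt ℝ (fun s => θ r s) s)
    (hθr : ∀ᶠ x in 𝓝 r, DifferentiableAt ℝ (fun x => θ x t) x) :
    pt (fun x s => G (θ x s) * pt (fun x s => F (θ x s)) x s) r t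
        - pr (fun x s => x * G (θ x s) * pr (fun x s => F (θ x s)) x s) r t / r
      = cylindricalWave θ r t := by
  have ht : (fun s => G (θ r s) * pt (fun x s => F (θ x s)) r s) =ᶠ[𝓝 t] pt θ r :=
    hθt.mono fun s hs => by
      simp only [pt_comp_s11 hF hs, ← mul_assoc, hGF, one_mul]
  have hr : (fun x => x * G (θ x t) * pr (fun x s => F (θ x s)) x t)
      =ᶠ[𝓝 r] fun x => x * pr θ x t :=
    hθr.mono fun x hx => by
      simp only [pr_comp_s11 hF hx, mul_assoc, ← mul_assoc (G _), hGF, one_mul]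
  simp only [cylindricalWave]
  rw [pt, ht.deriv_eq, pr, hr.deriv_eq]
  rfl

theorem einsteinRosen_of_comp {L L' F F' : ℝ → ℝ} (hL : ∀ y, HasDerivAt L (L' y) y)
    (hL' : ∀ y, HasDerivAt L' (F' y) y) (hF : ∀ y, HasDerivAt F (F' y) y)
    (hLF : ∀ y, exp (2 * L y) * F' y = 1) {θ : ℝ → ℝ → ℝ} {r t : ℝ} (hr : r ≠ 0)
    (hθt : ContDiffAt ℝ 2 (fun s => θ r s) t) (hθr : ContDiffAt ℝ 2 (fun x => θ x t) r)
    (hwave : cylindricalWave θ r t = 0) :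
    cylindricalWave (fun x s => L (θ x s)) r t
        = exp (2 * L (θ r t))
          * (pt (fun x s => F (θ x s)) r t ^ 2 - pr (fun x s => F (θ x s)) r t ^ 2) ∧
      pt (fun x s => exp (2 * L (θ x s)) * pt (fun x s => F (θ x s)) x s) r t
        - pr (fun x s => x * exp (2 * L (θ x s)) * pr (fun x s => F (θ x s)) x s) r t / r
        = 0 := by
  constructor
  · rw [cylindricalWave_comp hL hL' hr hθt hθr, hwave,
      pt_comp_s11 hF (hθt.differentiableAt two_ne_zero),
      pr_comp_s11 hF (hθr.differentiableAt two_ne_zero)]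
    linear_combination (-(F' (θ r t)) * (pt θ r t ^ 2 - pr θ r t ^ 2)) * hLF (θ r t)
  · rw [weighted_divergence_comp (G := fun y => exp (2 * L y)) hF hLF
      hθt.eventually_differentiableAt hθr.eventually_differentiableAt, hwave]

/-- A class of exact, globally defined solutions of the Einstein–Rosen system:
if `θ` is a `C²` solution of the cylindrical wave equation `(1/r)(r θ_r)_r − θ_tt = 0`
on `D = {r > 0}` and `C < γ²`, then with
`φ = ((√(γ²−C) − γ) e^{2√(γ²−C) θ} − (√(γ²−C) + γ))/(e^{2√(γ²−C) θ} + 1)` one has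
`φ² + 2γφ + C < 0` on `D`, so `ψ = −(1/2) log(−(φ² + 2γφ + C))` is well defined,
and `(ψ, φ)` solves `ψ_tt − (1/r)(r ψ_r)_r = e^{2ψ}(φ_t² − φ_r²)`,
`(e^{2ψ} φ_t)_t − (1/r)(r e^{2ψ} φ_r)_r = 0` on `D`. -/
theorem exact_solutions_from_wave_equation (γ C : ℝ) (hC : C < γ ^ 2)
    (θ φ ψ : ℝ → ℝ → ℝ)
    (hθ : ContDiffOn ℝ 2 (fun p : ℝ × ℝ => θ p.1 p.2) {p : ℝ × ℝ | 0 < p.1})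
    (hwave : ∀ r t : ℝ, 0 < r →
      pr (fun x s => x * pr θ x s) r t / r - pt (pt θ) r t = 0)
    (hφ : ∀ r t : ℝ, φ r t =
      ((Real.sqrt (γ ^ 2 - C) - γ) * Real.exp (2 * Real.sqrt (γ ^ 2 - C) * θ r t)
        - (Real.sqrt (γ ^ 2 - C) + γ))
      / (Real.exp (2 * Real.sqrt (γ ^ 2 - C) * θ r t) + 1))
    (hψ : ∀ r t : ℝ, ψ r t =
      -(1 / 2) * Real.log (-((φ r t) ^ 2 + 2 * γ * φ r t + C))) :
    ∀ r t : ℝ, 0 < r →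
      (φ r t) ^ 2 + 2 * γ * φ r t + C < 0 ∧
      pt (pt ψ) r t - pr (fun x s => x * pr ψ x s) r t / r
        = Real.exp (2 * ψ r t) * ((pt φ r t) ^ 2 - (pr φ r t) ^ 2) ∧
      pt (fun x s => Real.exp (2 * ψ x s) * pt φ x s) r t
        - pr (fun x s => x * Real.exp (2 * ψ x s) * pr φ x s) r t / r = 0 := by
  intro r t hr
  set k := √(γ ^ 2 - C)
  have hk : 0 < k := sqrt_pos.2 (sub_pos.2 hC)
  have hk2 : k ^ 2 = γ ^ 2 - C := sq_sqrt (sub_pos.2 hC).le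
  have hφ_tanh : ∀ x s, φ x s = k * tanh (k * θ x s) - γ := fun x s => by
    have := exp_pos (2 * k * θ x s)
    rw [hφ, tanh_eq_exp_two_mul, ← mul_assoc]
    field_simp
    ring
  have hquad : ∀ x s, φ x s ^ 2 + 2 * γ * φ x s + C = -(k / cosh (k * θ x s)) ^ 2 :=
    fun x s => by
      rw [div_pow, ← mul_one_div, ← one_sub_tanh_sq, hφ_tanh]
      linear_combination hk2
  refine ⟨(hquad r t).trans_lt (neg_neg_of_pos (by positivity)), ?_⟩
  obtain rfl : ψ = fun x s => log (cosh (k * θ x s)) - log k := funext₂ fun x s => by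
    rw [hψ, hquad, neg_neg, log_pow, log_div hk.ne' (cosh_pos _).ne']
    push_cast
    ring
  obtain rfl : φ = fun x s => k * tanh (k * θ x s) - γ := funext₂ hφ_tanh
  obtain ⟨hθt, hθr⟩ :=
    (hθ.contDiffAt ((isOpen_lt continuous_const continuous_fst).mem_nhds hr)).slices
  have hwave' : cylindricalWave θ r t = 0 := by
    rw [cylindricalWave]
    linarith [hwave r t hr]
  exact einsteinRosen_of_comp (fun y => (hasDerivAt_log_cosh_mul k y).sub_const (log k))
    (hasDerivAt_mul_tanh_mul k) (fun y => (hasDerivAt_mul_tanh_mul k y).sub_const γ)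
    (fun y => by
      rw [exp_two_mul_log_sub_log (cosh_pos _) hk]
      field_simp)
    hr.ne' hθt hθr hwave'
end

section
/- Let 0 < R₁ < R₂ and b, c ∈ ℝ. Let φ, ψ : [R₁,R₂] → ℝ be C² functions satisfying on (R₁,R₂) the stationary system (r e^{2ψ(r)} φ'(r))' = 0 and (1/r)(r ψ'(r))' = e^{2ψ(r)} φ'(r)², with boundary conditions φ(R₁) = 0, φ(R₂) = 0, ψ(R₁) = b, ψ(R₂) = c. Then φ(r) = 0 for all r ∈ [R₁,R₂] and ψ(r) = b + (c − b) · log(r/R₁)/log(R₂/R₁) for all r ∈ [R₁,R₂]. -/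
/-!
The first equation says that `r e^{2ψ} φ'` is constant on `(R₁, R₂)`. By Rolle's theorem
`φ'` vanishes somewhere, so this constant is `0`; as `r e^{2ψ} > 0`, `φ' ≡ 0` and
`φ ≡ φ(R₁) = 0`.
The second equation then reduces to `(r ψ')' = 0`, so `r ψ' = m` is constant and `ψ - m log r`
is constant on `[R₁, R₂]`; the boundary values determine `m = (c - b) / log (R₂ / R₁)`.
-/

open Set Real

theorem ContDiffOn.differentiableOn_deriv_of_isOpen {𝕜 F : Type*} [NontriviallyNormedField 𝕜]
    [NormedAddCommGroup F] [NormedSpace 𝕜 F] {f : 𝕜 → F} {s : Set 𝕜} {n : WithTop ℕ∞}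
    (hf : ContDiffOn 𝕜 n f s) (hs : IsOpen s) (hn : 2 ≤ n) :
    DifferentiableOn 𝕜 (deriv f) s :=
  (hf.deriv_of_isOpen hs (m := 1) hn).differentiableOn one_ne_zero

theorem constant_of_deriv_eq_zero_on_Ioo {f : ℝ → ℝ} {a b : ℝ}
    (hf : ContinuousOn f (Icc a b)) (hfd : DifferentiableOn ℝ f (Ioo a b))
    (h0 : ∀ x ∈ Ioo a b, deriv f x = 0) : ∀ x ∈ Icc a b, f x = f a := by
  intro x ⟨hax, hxb⟩
  rcases hax.eq_or_lt with rfl | hax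
  · rfl
  obtain ⟨c, hc, hslope⟩ := exists_deriv_eq_slope f hax (hf.mono (Icc_subset_Icc_right hxb))
    (hfd.mono (Ioo_subset_Ioo_right hxb))
  rw [h0 c ⟨hc.1, hc.2.trans_le hxb⟩, eq_comm, div_eq_zero_iff, sub_eq_zero] at hslope
  exact hslope.resolve_right (sub_ne_zero.2 hax.ne')

theorem deriv_eq_zero_of_deriv_weight_mul_deriv_eq_zero {φ w : ℝ → ℝ} {a b : ℝ}
    (hab : a < b) (hφ : ContinuousOn φ (Icc a b)) (hφab : φ a = φ b)
    (hφ' : DifferentiableOn ℝ (deriv φ) (Ioo a b))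
    (hw : DifferentiableOn ℝ w (Ioo a b)) (hw0 : ∀ x ∈ Ioo a b, w x ≠ 0)
    (h : ∀ x ∈ Ioo a b, deriv (fun x => w x * deriv φ x) x = 0) :
    ∀ x ∈ Ioo a b, deriv φ x = 0 := by
  obtain ⟨x₀, hx₀, hφx₀⟩ := exists_deriv_eq_zero hab hφ hφab
  intro x hx
  have hconst : w x * deriv φ x = w x₀ * deriv φ x₀ :=
    isOpen_Ioo.is_const_of_deriv_eq_zero isPreconnected_Ioo (hw.mul hφ') h hx hx₀
  rw [hφx₀, mul_zero, mul_eq_zero] at hconst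
  exact hconst.resolve_left (hw0 x hx)

theorem eq_log_interpolation_of_deriv_mul_deriv_eq_zero {ψ : ℝ → ℝ} {a b : ℝ} (ha : 0 < a)
    (hab : a < b) (hψ : ContinuousOn ψ (Icc a b)) (hψd : DifferentiableOn ℝ ψ (Ioo a b))
    (hψ' : DifferentiableOn ℝ (deriv ψ) (Ioo a b))
    (h : ∀ r ∈ Ioo a b, deriv (fun x => x * deriv ψ x) r = 0) :
    ∀ r ∈ Icc a b, ψ r = ψ a + (ψ b - ψ a) * log (r / a) / log (b / a) := by
  have hpos : ∀ x ∈ Icc a b, 0 < x := fun x hx => ha.trans_le hx.1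
  obtain ⟨m, hm⟩ : ∃ m, ∀ x ∈ Ioo a b, x * deriv ψ x = m :=
    isOpen_Ioo.exists_is_const_of_deriv_eq_zero isPreconnected_Ioo (differentiableOn_id.mul hψ') h
  have hlog : ∀ r ∈ Icc a b, ψ r - m * log r = ψ a - m * log a := by
    have hne : Icc a b ⊆ {0}ᶜ := fun x hx => (hpos x hx).ne'
    refine constant_of_deriv_eq_zero_on_Ioo
      (hψ.sub (continuousOn_const.mul (continuousOn_log.mono hne)))
      (hψd.sub (differentiableOn_const m |>.mul
        (differentiableOn_log.mono (Ioo_subset_Icc_self.trans hne))))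
      fun x hx => ?_
    have hx0 := (hpos x (Ioo_subset_Icc_self hx)).ne'
    rw [deriv_fun_sub ((hψd x hx).differentiableAt (isOpen_Ioo.mem_nhds hx))
      ((differentiableAt_log hx0).const_mul m), deriv_const_mul _ (differentiableAt_log hx0),
      deriv_log, ← hm x hx]
    field_simp
    ring
  have hmL : m * log (b / a) = ψ b - ψ a := by
    rw [log_div (hpos b (right_mem_Icc.2 hab.le)).ne' ha.ne']
    linarith [hlog b (right_mem_Icc.2 hab.le)]
  intro r hr
  rw [← hmL, log_div (hpos r hr).ne' ha.ne', mul_right_comm,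
    mul_div_cancel_right₀ _ (log_pos ((one_lt_div ha).2 hab)).ne']
  linarith [hlog r hr]

/-- Stationary Einstein–Rosen system with `φ(R₁) = φ(R₂) = 0`: the solution is
`φ ≡ 0` and `ψ` the explicit logarithmic harmonic interpolant of `b` and `c`. -/
theorem stationary_trivial_phi (R₁ R₂ b c : ℝ) (hR₁ : 0 < R₁) (hR₁₂ : R₁ < R₂)
    (φ ψ : ℝ → ℝ)
    (hφ : ContDiffOn ℝ 2 φ (Set.Icc R₁ R₂)) (hψ : ContDiffOn ℝ 2 ψ (Set.Icc R₁ R₂))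
    (heq1 : ∀ r ∈ Set.Ioo R₁ R₂,
      deriv (fun x => x * Real.exp (2 * ψ x) * deriv φ x) r = 0)
    (heq2 : ∀ r ∈ Set.Ioo R₁ R₂,
      deriv (fun x => x * deriv ψ x) r / r = Real.exp (2 * ψ r) * (deriv φ r) ^ 2)
    (hφ1 : φ R₁ = 0) (hφ2 : φ R₂ = 0) (hψ1 : ψ R₁ = b) (hψ2 : ψ R₂ = c) :
    ∀ r ∈ Set.Icc R₁ R₂,
      φ r = 0 ∧ ψ r = b + (c - b) * Real.log (r / R₁) / Real.log (R₂ / R₁) := by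
  have hpos : ∀ x ∈ Ioo R₁ R₂, 0 < x := fun x hx => hR₁.trans hx.1
  have hφI := hφ.mono Ioo_subset_Icc_self
  have hψI := hψ.mono Ioo_subset_Icc_self
  have hψd : DifferentiableOn ℝ ψ (Ioo R₁ R₂) := hψI.differentiableOn two_ne_zero
  have hφ' : ∀ x ∈ Ioo R₁ R₂, deriv φ x = 0 :=
    deriv_eq_zero_of_deriv_weight_mul_deriv_eq_zero (w := fun x => x * exp (2 * ψ x)) hR₁₂
      hφ.continuousOn (hφ1.trans hφ2.symm)
      (hφI.differentiableOn_deriv_of_isOpen isOpen_Ioo le_rfl)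
      (differentiableOn_id.mul (hψd.const_mul 2).exp)
      (fun x hx => (mul_pos (hpos x hx) (exp_pos _)).ne') heq1
  have hrψ' : ∀ r ∈ Ioo R₁ R₂, deriv (fun x => x * deriv ψ x) r = 0 := fun r hr => by
    simpa [hφ' r hr, (hpos r hr).ne'] using heq2 r hr
  intro r hr
  refine ⟨hφ1 ▸ constant_of_deriv_eq_zero_on_Ioo hφ.continuousOn
    (hφI.differentiableOn two_ne_zero) hφ' r hr, ?_⟩
  rw [← hψ1, ← hψ2]
  exact eq_log_interpolation_of_deriv_mul_deriv_eq_zero hR₁ hR₁₂ hψ.continuousOn hψd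
    (hψI.differentiableOn_deriv_of_isOpen isOpen_Ioo le_rfl) hrψ' r hr
end

section
/- Let 0 < R₁ < R₂, a > 0, b, c ∈ ℝ. Let φ, ψ : [R₁,R₂] → ℝ be C² functions satisfying on (R₁,R₂) the stationary system (r e^{2ψ(r)} φ'(r))' = 0 and (1/r)(r ψ'(r))' = e^{2ψ(r)} φ'(r)², with φ(R₁) = 0, φ(R₂) = a, ψ(R₁) = b, ψ(R₂) = c. Define θ(r) = φ(r)²/2 + (e^{−2ψ(r)} − e^{−2b})/2. Then θ is C², satisfies (r e^{2ψ(r)} θ'(r))' = 0 on (R₁,R₂), and θ(R₁) = 0, θ(R₂) = a²/2 + e^{−2c}/2 − e^{−2b}/2. -/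
/-!
Since `θ' = φ φ' − ψ' e^{−2ψ}`, we have `r e^{2ψ} θ' = (r e^{2ψ} φ') φ − r ψ'`.
The first factor is constant by the first equation, so the derivative of the right side is
`r e^{2ψ} φ'² − (r ψ')'`, which vanishes by the second equation.
-/

open Real Filter Topology

noncomputable section

def symmetrizedPotential (b : ℝ) (φ ψ : ℝ → ℝ) (r : ℝ) : ℝ :=
  φ r ^ 2 / 2 + (exp (-(2 * ψ r)) - exp (-(2 * b))) / 2

variable {b : ℝ} {φ ψ : ℝ → ℝ}

theorem ContDiffOn.symmetrizedPotential {n : WithTop ℕ∞} {s : Set ℝ}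
    (hφ : ContDiffOn ℝ n φ s) (hψ : ContDiffOn ℝ n ψ s) :
    ContDiffOn ℝ n (symmetrizedPotential b φ ψ) s :=
  ((hφ.pow 2).div_const 2).add
    (((contDiff_exp.comp_contDiffOn (contDiffOn_const.mul hψ).neg).sub
      contDiffOn_const).div_const 2)

theorem hasDerivAt_symmetrizedPotential {φ' ψ' x : ℝ} (hφ : HasDerivAt φ φ' x)
    (hψ : HasDerivAt ψ ψ' x) :
    HasDerivAt (symmetrizedPotential b φ ψ) (φ x * φ' - ψ' * exp (-(2 * ψ x))) x := by
  refine (((hφ.fun_pow 2).div_const 2).fun_add ((((hψ.const_mul 2).fun_neg.exp).sub_const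
    (exp (-(2 * b)))).div_const 2)).congr_deriv ?_
  push_cast
  ring

theorem mul_exp_mul_deriv_symmetrizedPotential {x : ℝ} (hφ : DifferentiableAt ℝ φ x)
    (hψ : DifferentiableAt ℝ ψ x) :
    x * exp (2 * ψ x) * deriv (symmetrizedPotential b φ ψ) x
      = x * exp (2 * ψ x) * deriv φ x * φ x - x * deriv ψ x := by
  rw [(hasDerivAt_symmetrizedPotential hφ.hasDerivAt hψ.hasDerivAt).deriv, exp_neg]
  field_simp

theorem deriv_mul_exp_mul_deriv_symmetrizedPotential {r : ℝ} (hφ : ContDiffAt ℝ 2 φ r)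
    (hψ : ContDiffAt ℝ 2 ψ r)
    (hflux : deriv (fun x => x * exp (2 * ψ x) * deriv φ x) r = 0)
    (hradial : deriv (fun x => x * deriv ψ x) r = r * exp (2 * ψ r) * deriv φ r ^ 2) :
    deriv (fun x => x * exp (2 * ψ x) * deriv (symmetrizedPotential b φ ψ) x) r = 0 := by
  have hφ_near : ∀ᶠ x in 𝓝 r, DifferentiableAt ℝ φ x :=
    (hφ.eventually (by simp)).mono fun x hx => hx.differentiableAt (by simp)
  have hψ_near : ∀ᶠ x in 𝓝 r, DifferentiableAt ℝ ψ x :=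
    (hψ.eventually (by simp)).mono fun x hx => hx.differentiableAt (by simp)
  have hφ' : DifferentiableAt ℝ (deriv φ) r :=
    (hφ.derivWithin (m := 1) le_rfl).differentiableAt one_ne_zero
  have hψ' : DifferentiableAt ℝ (deriv ψ) r :=
    (hψ.derivWithin (m := 1) le_rfl).differentiableAt one_ne_zero
  have hφd : DifferentiableAt ℝ φ r := hφ_near.self_of_nhds
  have hψd : DifferentiableAt ℝ ψ r := hψ_near.self_of_nhds
  have hflux_deriv : HasDerivAt (fun x => x * exp (2 * ψ x) * deriv φ x) 0 r := by
    rw [← hflux]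
    exact DifferentiableAt.hasDerivAt (by fun_prop)
  have hradial_deriv :
      HasDerivAt (fun x => x * deriv ψ x) (r * exp (2 * ψ r) * deriv φ r ^ 2) r := by
    rw [← hradial]
    exact DifferentiableAt.hasDerivAt (by fun_prop)
  have hrewrite : (fun x => x * exp (2 * ψ x) * deriv (symmetrizedPotential b φ ψ) x)
      =ᶠ[𝓝 r] fun x => x * exp (2 * ψ x) * deriv φ x * φ x - x * deriv ψ x := by
    filter_upwards [hφ_near, hψ_near] with x hφx hψx
    exact mul_exp_mul_deriv_symmetrizedPotential hφx hψx
  rw [hrewrite.deriv_eq, ((hflux_deriv.fun_mul hφd.hasDerivAt).fun_sub hradial_deriv).deriv]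
  ring

end

theorem symmetrizing_substitution_general (R₁ R₂ a b c : ℝ) (hR₁ : 0 < R₁)
    (φ ψ θ : ℝ → ℝ)
    (hφ : ContDiffOn ℝ 2 φ (Set.Icc R₁ R₂)) (hψ : ContDiffOn ℝ 2 ψ (Set.Icc R₁ R₂))
    (heq1 : ∀ r ∈ Set.Ioo R₁ R₂,
      deriv (fun x => x * Real.exp (2 * ψ x) * deriv φ x) r = 0)
    (heq2 : ∀ r ∈ Set.Ioo R₁ R₂,
      deriv (fun x => x * deriv ψ x) r / r = Real.exp (2 * ψ r) * (deriv φ r) ^ 2)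
    (hφ1 : φ R₁ = 0) (hφ2 : φ R₂ = a) (hψ1 : ψ R₁ = b) (hψ2 : ψ R₂ = c)
    (hθ : ∀ r : ℝ, θ r = (φ r) ^ 2 / 2
      + (Real.exp (-(2 * ψ r)) - Real.exp (-(2 * b))) / 2) :
    ContDiffOn ℝ 2 θ (Set.Icc R₁ R₂) ∧
    (∀ r ∈ Set.Ioo R₁ R₂,
      deriv (fun x => x * Real.exp (2 * ψ x) * deriv θ x) r = 0) ∧
    θ R₁ = 0 ∧
    θ R₂ = a ^ 2 / 2 + Real.exp (-(2 * c)) / 2 - Real.exp (-(2 * b)) / 2 := by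
  obtain rfl : θ = symmetrizedPotential b φ ψ := funext hθ
  refine ⟨hφ.symmetrizedPotential hψ, fun r hr => ?_, ?_, ?_⟩
  · have hr_nhds : Set.Icc R₁ R₂ ∈ 𝓝 r := Icc_mem_nhds hr.1 hr.2
    have hr_ne : r ≠ 0 := (hR₁.trans hr.1).ne'
    refine deriv_mul_exp_mul_deriv_symmetrizedPotential (hφ.contDiffAt hr_nhds)
      (hψ.contDiffAt hr_nhds) (heq1 r hr) ?_
    have hradial := heq2 r hr
    rw [div_eq_iff hr_ne] at hradial
    rw [hradial]
    ring
  · simp [symmetrizedPotential, hφ1, hψ1]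
  · simp only [symmetrizedPotential, hφ2, hψ2]
    ring

/-- The symmetrizing substitution: if `(φ, ψ)` solves the stationary
Einstein–Rosen system, then `θ = φ²/2 + (e^{−2ψ} − e^{−2b})/2` is `C²`, solves
`(r e^{2ψ} θ')' = 0`, and has boundary values `θ(R₁) = 0`,
`θ(R₂) = a²/2 + e^{−2c}/2 − e^{−2b}/2`. -/
theorem symmetrizing_substitution (R₁ R₂ a b c : ℝ) (hR₁ : 0 < R₁) (hR₁₂ : R₁ < R₂)
    (ha : 0 < a) (φ ψ θ : ℝ → ℝ)
    (hφ : ContDiffOn ℝ 2 φ (Set.Icc R₁ R₂)) (hψ : ContDiffOn ℝ 2 ψ (Set.Icc R₁ R₂))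
    (heq1 : ∀ r ∈ Set.Ioo R₁ R₂,
      deriv (fun x => x * Real.exp (2 * ψ x) * deriv φ x) r = 0)
    (heq2 : ∀ r ∈ Set.Ioo R₁ R₂,
      deriv (fun x => x * deriv ψ x) r / r = Real.exp (2 * ψ r) * (deriv φ r) ^ 2)
    (hφ1 : φ R₁ = 0) (hφ2 : φ R₂ = a) (hψ1 : ψ R₁ = b) (hψ2 : ψ R₂ = c)
    (hθ : ∀ r : ℝ, θ r = (φ r) ^ 2 / 2
      + (Real.exp (-(2 * ψ r)) - Real.exp (-(2 * b))) / 2) :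
    ContDiffOn ℝ 2 θ (Set.Icc R₁ R₂) ∧
    (∀ r ∈ Set.Ioo R₁ R₂,
      deriv (fun x => x * Real.exp (2 * ψ x) * deriv θ x) r = 0) ∧
    θ R₁ = 0 ∧
    θ R₂ = a ^ 2 / 2 + Real.exp (-(2 * c)) / 2 - Real.exp (-(2 * b)) / 2 :=
  symmetrizing_substitution_general R₁ R₂ a b c hR₁ φ ψ θ hφ hψ heq1 heq2 hφ1 hφ2 hψ1 hψ2 hθ
end

section
/- Let 0 < R₁ < R₂, a > 0, b, c ∈ ℝ. Set M = a + (e^{−2c} − e^{−2b})/a and f(x) = −x² + M x + e^{−2b}, which is strictly positive on [0,a]. Define U : [0,a] → ℝ by U(x) = ∫₀ˣ dt/f(t); then U is strictly increasing, hence a bijection from [0,a] onto [0, U(a)]. Define u(r) = U(a) · log(r/R₁)/log(R₂/R₁) for r ∈ [R₁,R₂], φ(r) = U⁻¹(u(r)), and ψ(r) = −(1/2) log f(φ(r)). Then φ and ψ are C² on [R₁,R₂] and satisfy on (R₁,R₂) the stationary system (r e^{2ψ(r)} φ'(r))' = 0 and (1/r)(r ψ'(r))' = e^{2ψ(r)}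 φ'(r)², with boundary values φ(R₁) = 0, φ(R₂) = a, ψ(R₁) = b, ψ(R₂) = c. -/
open Set Filter Topology intervalIntegral

/-!
`U` is a primitive of `1 / f`, so `φ = U⁻¹ ∘ u` solves `dφ/du = f(φ)`; as `u = K log (r / R₁)`
with `K = U(a) / log (R₂ / R₁)`, this reads `r φ' = K f(φ)`. Since `e^{2ψ} = 1 / f(φ)`, the flux
`r e^{2ψ} φ'` is the constant `K`, and `r ψ' = -(K / 2) f'(φ) = K φ - K M / 2` has derivative
`K φ' = r e^{2ψ} φ'²`. The set `{f > 0}` is an open interval (`f` is concave) containing `0` and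
`a`, on which `U' = 1 / f` never vanishes, so the inverse function theorem makes `φ` as smooth as
`U`. The boundary values come from `U 0 = 0`, `f 0 = e^{-2b}` and `f a = e^{-2c}`, the last being
what the choice of `M` ensures.
-/

theorem ordConnected_setOf_quadratic_pos (M C : ℝ) :
    OrdConnected {x : ℝ | 0 < -x ^ 2 + M * x + C} := by
  refine ⟨fun p hp q hq x hx => ?_⟩
  simp only [mem_ofPred_eq] at hp hq ⊢
  rcases hx.1.eq_or_lt with rfl | hpx
  · exact hp
  · have hpq : 0 < q - p := sub_pos.2 (hpx.trans_le hx.2)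
    -- concavity: (q - p) f x = (q - x) f p + (x - p) f q + (q - p) (x - p) (q - x)
    nlinarith [mul_nonneg (mul_nonneg (sub_nonneg.2 hx.1) (sub_nonneg.2 hx.2)) hpq.le,
      mul_nonneg (sub_nonneg.2 hx.2) hp.le, mul_pos (sub_pos.2 hpx) hq]

section Primitive

variable {g : ℝ → ℝ} {I : Set ℝ} {x₀ : ℝ}

theorem hasDerivAt_integral_of_continuousOn (hI : IsOpen I) [I.OrdConnected]
    (hg : ContinuousOn g I) (hx₀ : x₀ ∈ I) {x : ℝ} (hx : x ∈ I) :
    HasDerivAt (fun y => ∫ t in x₀..y, g t) (g x) x :=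
  integral_hasDerivAt_right (hg.mono (OrdConnected.uIcc_subset ‹_› hx₀ hx)).intervalIntegrable
    (hg.stronglyMeasurableAtFilter hI x hx) (hg.continuousAt (hI.mem_nhds hx))

theorem strictMonoOn_integral_of_pos (hI : IsOpen I) [I.OrdConnected] (hg : ContinuousOn g I)
    (hpos : ∀ x ∈ I, 0 < g x) (hx₀ : x₀ ∈ I) :
    StrictMonoOn (fun y => ∫ t in x₀..y, g t) I := by
  have hd := fun x hx => hasDerivAt_integral_of_continuousOn hI hg hx₀ (x := x) hx
  refine strictMonoOn_of_deriv_pos (OrdConnected.convex ‹_›)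
    (fun x hx => (hd x hx).continuousAt.continuousWithinAt) fun x hx => ?_
  rw [hI.interior_eq] at hx
  rw [(hd x hx).deriv]
  exact hpos x hx

theorem contDiffOn_integral (hI : IsOpen I) [I.OrdConnected] {n : ℕ} (hg : ContDiffOn ℝ n g I)
    (hx₀ : x₀ ∈ I) : ContDiffOn ℝ (n + 1) (fun y => ∫ t in x₀..y, g t) I := by
  have hd := fun x hx => hasDerivAt_integral_of_continuousOn hI hg.continuousOn hx₀ (x := x) hx
  rw [contDiffOn_succ_iff_deriv_of_isOpen hI]
  exact ⟨fun x hx => (hd x hx).differentiableAt.differentiableWithinAt, by simp,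
    hg.congr fun x hx => (hd x hx).deriv⟩

end Primitive

theorem StrictMonoOn.bijOn_Icc {U : ℝ → ℝ} {p q : ℝ} (hU : StrictMonoOn U (Icc p q))
    (hc : ContinuousOn U (Icc p q)) (hpq : p ≤ q) : BijOn U (Icc p q) (Icc (U p) (U q)) :=
  ⟨hU.monotoneOn.mapsTo_Icc, hU.injOn,
    hc.surjOn_Icc (left_mem_Icc.2 hpq) (right_mem_Icc.2 hpq)⟩

section LocalInverse

variable {n : WithTop ℕ∞} {U u φ : ℝ → ℝ} {I S : Set ℝ} {r₀ d : ℝ}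

theorem exists_localInverse_comp_eventuallyEq (hn : n ≠ 0) (hI : IsOpen I) (hinj : InjOn U I)
    (hU : ContDiffOn ℝ n U I) (hφ : ∀ s ∈ S, φ s ∈ I ∧ U (φ s) = u s) (hr₀ : r₀ ∈ S)
    (hu : ContinuousAt u r₀) (hd : HasDerivAt U d (φ r₀)) (hd0 : d ≠ 0) :
    ∃ V : ℝ → ℝ, ContDiffAt ℝ n V (u r₀) ∧ HasDerivAt V d⁻¹ (u r₀) ∧
      ∀ᶠ s in 𝓝 r₀, s ∈ S → φ s = V (u s) := by
  obtain ⟨hx₀, hUx₀⟩ := hφ r₀ hr₀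
  have hcd : ContDiffAt ℝ n U (φ r₀) := hU.contDiffAt (hI.mem_nhds hx₀)
  have hfd := hd.hasFDerivAt_equiv hd0
  have hstrict := hcd.hasStrictFDerivAt' hfd hn
  have hV : ∀ᶠ y in 𝓝 (U (φ r₀)),
      U (hcd.localInverse hfd hn y) = y ∧ hcd.localInverse hfd hn y ∈ I := by
    refine hstrict.eventually_right_inverse.and
      (hstrict.localInverse_continuousAt.eventually_mem ?_)
    convert hI.mem_nhds hx₀
    exact hcd.localInverse_apply_image hfd hn
  rw [hUx₀] at hV
  refine ⟨hcd.localInverse hfd hn, hUx₀ ▸ hcd.to_localInverse hfd hn,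
    hUx₀ ▸ ((hcd.hasStrictDerivAt' hd hn).to_localInverse hd0).hasDerivAt,
    (hu.eventually hV).mono fun s hs hsS => ?_⟩
  obtain ⟨hφs, hUφs⟩ := hφ s hsS
  exact hinj hφs hs.2 (by rw [hUφs, hs.1])

theorem contDiffWithinAt_of_comp_eq (hn : n ≠ 0) (hI : IsOpen I) (hinj : InjOn U I)
    (hU : ContDiffOn ℝ n U I) {U' : ℝ → ℝ} (hU' : ∀ x ∈ I, HasDerivAt U (U' x) x)
    (hU'0 : ∀ x ∈ I, U' x ≠ 0) (hφ : ∀ s ∈ S, φ s ∈ I ∧ U (φ s) = u s) (hr₀ : r₀ ∈ S)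
    (hu : ContDiffAt ℝ n u r₀) : ContDiffWithinAt ℝ n φ S r₀ := by
  have hx₀ := (hφ r₀ hr₀).1
  obtain ⟨V, hV, -, hφV⟩ := exists_localInverse_comp_eventuallyEq hn hI hinj hU hφ hr₀
    hu.continuousAt (hU' _ hx₀) (hU'0 _ hx₀)
  exact (hV.comp r₀ hu).contDiffWithinAt.congr_of_eventuallyEq
    (eventually_nhdsWithin_iff.2 hφV) (hφV.self_of_nhds hr₀)

theorem hasDerivAt_of_comp_eq (hn : n ≠ 0) (hI : IsOpen I) (hinj : InjOn U I)
    (hU : ContDiffOn ℝ n U I) {U' : ℝ → ℝ} (hU' : ∀ x ∈ I, HasDerivAt U (U' x) x)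
    (hU'0 : ∀ x ∈ I, U' x ≠ 0) (hφ : ∀ s ∈ S, φ s ∈ I ∧ U (φ s) = u s) (hS : S ∈ 𝓝 r₀)
    {u' : ℝ} (hu : HasDerivAt u u' r₀) : HasDerivAt φ ((U' (φ r₀))⁻¹ * u') r₀ := by
  have hx₀ := (hφ _ (mem_of_mem_nhds hS)).1
  obtain ⟨V, -, hV, hφV⟩ := exists_localInverse_comp_eventuallyEq hn hI hinj hU hφ
    (mem_of_mem_nhds hS) hu.continuousAt (hU' _ hx₀) (hU'0 _ hx₀)
  exact (hV.comp r₀ hu).congr_of_eventuallyEq ((hφV.and hS).mono fun s hs => hs.1 hs.2)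

end LocalInverse

section LogRadius

variable (K : ℝ) {R r : ℝ}

theorem hasDerivAt_const_mul_log_div (hR : R ≠ 0) (hr : r ≠ 0) :
    HasDerivAt (fun x => K * Real.log (x / R)) (K / r) r :=
  ((((hasDerivAt_id' r).div_const R).log (div_ne_zero hr hR)).const_mul K).congr_deriv
    (by field_simp)

theorem contDiffAt_const_mul_log_div {n : WithTop ℕ∞} (hR : R ≠ 0) (hr : r ≠ 0) :
    ContDiffAt ℝ n (fun x => K * Real.log (x / R)) r :=
  contDiffAt_const.mul ((contDiffAt_id.div_const R).log (div_ne_zero hr hR))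

end LogRadius

section StationarySystem

variable {M C K : ℝ} {f φ ψ : ℝ → ℝ} {S : Set ℝ}

theorem exp_two_mul_neg_half_mul_log {y : ℝ} (hy : 0 < y) :
    Real.exp (2 * (-(1 / 2) * Real.log y)) = y⁻¹ := by
  rw [show 2 * (-(1 / 2) * Real.log y) = -Real.log y by ring, Real.exp_neg, Real.exp_log hy]

theorem deriv_mul_exp_mul_deriv_eq_zero (hS : IsOpen S) (hS₀ : ∀ s ∈ S, s ≠ 0)
    (hφ : ∀ s ∈ S, HasDerivAt φ (f (φ s) * (K / s)) s) (hfφ : ∀ s ∈ S, 0 < f (φ s))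
    (hψ : ∀ s ∈ S, ψ s = -(1 / 2) * Real.log (f (φ s))) {r : ℝ} (hr : r ∈ S) :
    deriv (fun x => x * Real.exp (2 * ψ x) * deriv φ x) r = 0 := by
  have hconst : (fun x => x * Real.exp (2 * ψ x) * deriv φ x) =ᶠ[𝓝 r] fun _ => K := by
    filter_upwards [hS.mem_nhds hr] with s hs
    rw [(hφ s hs).deriv, hψ s hs, exp_two_mul_neg_half_mul_log (hfφ s hs)]
    field_simp [hS₀ s hs, (hfφ s hs).ne']
  rw [hconst.deriv_eq, deriv_const]

theorem deriv_mul_deriv_div_eq (hf : ∀ x, f x = -x ^ 2 + M * x + C) (hS : IsOpen S)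
    (hS₀ : ∀ s ∈ S, s ≠ 0) (hφ : ∀ s ∈ S, HasDerivAt φ (f (φ s) * (K / s)) s)
    (hfφ : ∀ s ∈ S, 0 < f (φ s)) (hψ : ∀ s ∈ S, ψ s = -(1 / 2) * Real.log (f (φ s)))
    {r : ℝ} (hr : r ∈ S) :
    deriv (fun x => x * deriv ψ x) r / r = Real.exp (2 * ψ r) * deriv φ r ^ 2 := by
  have hf' : ∀ x, HasDerivAt f (M - 2 * x) x := fun x => by
    rw [show f = fun x => -x ^ 2 + M * x + C from funext hf]
    simpa [sub_eq_neg_add, mul_comm] using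
      (((hasDerivAt_pow 2 x).neg).add ((hasDerivAt_id x).const_mul M)).add_const C
  have hψ' : ∀ s ∈ S, HasDerivAt ψ
      (-(1 / 2) * ((M - 2 * φ s) * (f (φ s) * (K / s)) / f (φ s))) s := fun s hs =>
    ((((hf' (φ s)).comp s (hφ s hs)).log (hfφ s hs).ne').const_mul _).congr_of_eventuallyEq
      (eventually_of_mem (hS.mem_nhds hs) hψ)
  have hflux : (fun x => x * deriv ψ x) =ᶠ[𝓝 r] fun x => K * φ x - K * M / 2 := by
    filter_upwards [hS.mem_nhds hr] with s hs
    rw [(hψ' s hs).deriv]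
    field_simp [hS₀ s hs, (hfφ s hs).ne']
    ring
  rw [hflux.deriv_eq, (((hφ r hr).const_mul K).sub_const _).deriv, (hφ r hr).deriv, hψ r hr,
    exp_two_mul_neg_half_mul_log (hfφ r hr)]
  field_simp [hS₀ r hr, (hfφ r hr).ne']

end StationarySystem

/-- Explicit solution of the stationary two-point problem: with
`M = a + (e^{−2c} − e^{−2b})/a`, `f(x) = −x² + Mx + e^{−2b}` (positive on `[0,a]`),
`U(x) = ∫₀ˣ dt/f(t)` (strictly increasing, a bijection from `[0,a]` onto `[0,U(a)]`),
`u(r) = U(a) log(r/R₁)/log(R₂/R₁)`, `φ = U⁻¹ ∘ u` and `ψ = −(1/2) log f(φ)`,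
the pair `(φ, ψ)` is `C²` and solves the stationary Einstein–Rosen system with
boundary values `φ(R₁) = 0`, `φ(R₂) = a`, `ψ(R₁) = b`, `ψ(R₂) = c`. -/
theorem stationary_existence (R₁ R₂ a b c M : ℝ) (hR₁ : 0 < R₁) (hR₁₂ : R₁ < R₂)
    (ha : 0 < a)
    (hM : M = a + (Real.exp (-(2 * c)) - Real.exp (-(2 * b))) / a)
    (f U u φ ψ : ℝ → ℝ)
    (hf : ∀ x : ℝ, f x = -x ^ 2 + M * x + Real.exp (-(2 * b)))
    (hU : ∀ x : ℝ, U x = ∫ t in (0 : ℝ)..x, 1 / f t)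
    (hu : ∀ r : ℝ, u r = U a * Real.log (r / R₁) / Real.log (R₂ / R₁))
    (hφ : ∀ r ∈ Set.Icc R₁ R₂, φ r ∈ Set.Icc 0 a ∧ U (φ r) = u r)
    (hψ : ∀ r : ℝ, ψ r = -(1 / 2) * Real.log (f (φ r))) :
    (∀ x ∈ Set.Icc 0 a, 0 < f x) ∧
    StrictMonoOn U (Set.Icc 0 a) ∧
    Set.BijOn U (Set.Icc 0 a) (Set.Icc 0 (U a)) ∧
    ContDiffOn ℝ 2 φ (Set.Icc R₁ R₂) ∧
    ContDiffOn ℝ 2 ψ (Set.Icc R₁ R₂) ∧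
    (∀ r ∈ Set.Ioo R₁ R₂,
      deriv (fun x => x * Real.exp (2 * ψ x) * deriv φ x) r = 0) ∧
    (∀ r ∈ Set.Ioo R₁ R₂,
      deriv (fun x => x * deriv ψ x) r / r = Real.exp (2 * ψ r) * (deriv φ r) ^ 2) ∧
    φ R₁ = 0 ∧ φ R₂ = a ∧ ψ R₁ = b ∧ ψ R₂ = c := by
  have hf2 : ContDiff ℝ 2 f := by rw [funext hf]; fun_prop
  have hf0 : f 0 = Real.exp (-(2 * b)) := by rw [hf]; ring
  have hfa : f a = Real.exp (-(2 * c)) := by rw [hf, hM]; field_simp; ring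
  set I := {x | 0 < f x}
  have hI : IsOpen I := isOpen_lt continuous_const hf2.continuous
  have hIconn : I.OrdConnected := by simp only [I, hf]; exact ordConnected_setOf_quadratic_pos _ _
  have h0I : (0 : ℝ) ∈ I := by simp only [I, mem_ofPred_eq, hf0, Real.exp_pos]
  have h0aI : Icc 0 a ⊆ I := hIconn.out h0I (by simp only [I, mem_ofPred_eq, hfa, Real.exp_pos])
  have hinv : ContDiffOn ℝ 1 (fun t => 1 / f t) I :=
    contDiffOn_const.div (hf2.of_le one_le_two).contDiffOn fun x hx => ne_of_gt hx
  have hUeq : U = fun y => ∫ t in (0 : ℝ)..y, 1 / f t := funext hU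
  have hUd : ∀ x ∈ I, HasDerivAt U (1 / f x) x := fun x hx =>
    hUeq ▸ hasDerivAt_integral_of_continuousOn hI hinv.continuousOn h0I hx
  have hUmono : StrictMonoOn U I :=
    hUeq ▸ strictMonoOn_integral_of_pos hI hinv.continuousOn (fun x hx => one_div_pos.2 hx) h0I
  have hU2 : ContDiffOn ℝ 2 U I := hUeq ▸ contDiffOn_integral hI hinv h0I
  have hU0 : U 0 = 0 := by rw [hU, integral_same]
  set K := U a / Real.log (R₂ / R₁)
  have hueq : u = fun r => K * Real.log (r / R₁) := funext fun r => by rw [hu]; ring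
  have hφI : ∀ r ∈ Icc R₁ R₂, φ r ∈ I ∧ U (φ r) = u r := fun r hr =>
    ⟨h0aI (hφ r hr).1, (hφ r hr).2⟩
  have hUd0 : ∀ x ∈ I, 1 / f x ≠ 0 := fun x hx => (one_div_pos.2 hx).ne'
  have hφ2 : ContDiffOn ℝ 2 φ (Icc R₁ R₂) := fun r hr =>
    contDiffWithinAt_of_comp_eq two_ne_zero hI hUmono.injOn hU2 hUd hUd0 hφI hr
      (hueq ▸ contDiffAt_const_mul_log_div K hR₁.ne' (hR₁.trans_le hr.1).ne')
  have hφd : ∀ r ∈ Ioo R₁ R₂, HasDerivAt φ (f (φ r) * (K / r)) r := fun r hr => by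
    simpa using hasDerivAt_of_comp_eq two_ne_zero hI hUmono.injOn hU2 hUd hUd0 hφI
      (Icc_mem_nhds hr.1 hr.2) (hueq ▸ hasDerivAt_const_mul_log_div K hR₁.ne' (hR₁.trans hr.1).ne')
  have hψ2 : ContDiffOn ℝ 2 ψ (Icc R₁ R₂) :=
    (contDiffOn_const.mul ((hf2.comp_contDiffOn hφ2).log fun r hr => (hφI r hr).1.ne')).congr
      fun r _ => hψ r
  have hφR₁ : φ R₁ = 0 := hUmono.injOn (hφI R₁ ⟨le_rfl, hR₁₂.le⟩).1 h0I (by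
    rw [(hφ R₁ ⟨le_rfl, hR₁₂.le⟩).2, hu, div_self hR₁.ne', Real.log_one, mul_zero, zero_div, hU0])
  have hφR₂ : φ R₂ = a := hUmono.injOn (hφI R₂ ⟨hR₁₂.le, le_rfl⟩).1 (h0aI ⟨ha.le, le_rfl⟩) (by
    rw [(hφ R₂ ⟨hR₁₂.le, le_rfl⟩).2, hu, mul_div_assoc, div_self, mul_one]
    exact (Real.log_pos ((one_lt_div hR₁).2 hR₁₂)).ne')
  have hS₀ : ∀ s ∈ Ioo R₁ R₂, s ≠ 0 := fun s hs => (hR₁.trans hs.1).ne'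
  have hfφ : ∀ s ∈ Ioo R₁ R₂, 0 < f (φ s) := fun s hs => (hφI s (Ioo_subset_Icc_self hs)).1
  have hUm : StrictMonoOn U (Icc 0 a) := hUmono.mono h0aI
  have hbij : BijOn U (Icc 0 a) (Icc 0 (U a)) := by
    simpa only [hU0] using hUm.bijOn_Icc (hU2.continuousOn.mono h0aI) ha.le
  refine ⟨fun x hx => h0aI hx, hUm, hbij, hφ2, hψ2,
    fun r => deriv_mul_exp_mul_deriv_eq_zero isOpen_Ioo hS₀ hφd hfφ (fun s _ => hψ s),
    fun r => deriv_mul_deriv_div_eq hf isOpen_Ioo hS₀ hφd hfφ (fun s _ => hψ s),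
    hφR₁, hφR₂, ?_, ?_⟩
  · rw [hψ, hφR₁, hf0, Real.log_exp]; ring
  · rw [hψ, hφR₂, hfa, Real.log_exp]; ring
end

section
/- Let 0 < R₁ < R₂, a > 0, b, c ∈ ℝ. Suppose (φ₁, ψ₁) and (φ₂, ψ₂) are two pairs of C² functions on [R₁,R₂] each satisfying on (R₁,R₂) the stationary system (r e^{2ψ(r)} φ'(r))' = 0 and (1/r)(r ψ'(r))' = e^{2ψ(r)} φ'(r)², with the same boundary data φ(R₁) = 0, φ(R₂) = a, ψ(R₁) = b, ψ(R₂) = c. Then φ₁ = φ₂ and ψ₁ = ψ₂ on [R₁,R₂]. -/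
open Real Set

/-!
In the variable `t = log r` the stationary system is the geodesic equation of the hyperbolic
metric `dψ² + e^{2ψ} dφ²`, so each solution is a geodesic of the hyperbolic plane, realised here
on the hyperboloid `⟪P, P⟫ = -1` of Minkowski space. For two geodesics `P`, `R` the function
`-⟪P, R⟫ = cosh (dist P R)` is convex: its second derivative is
`(|P'|² + |R'|²) (-⟪P, R⟫) - 2 ⟪P', R'⟫`, which is nonnegative because Gram determinants of
Minkowski vectors are nonpositive. It equals `1` at both endpoints, and it is `≥ 1` with equality
only where `P = R`.
-/

/-- The form of signature `(−,+,+)`, in light-cone coordinates `p 0`, `p 1` and a spatial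
coordinate `p 2`. -/
def minkowski (p q : Fin 3 → ℝ) : ℝ := p 2 * q 2 - (p 0 * q 1 + p 1 * q 0)

local notation "⟪" p ", " q "⟫ₘ" => minkowski p q

theorem minkowski_comm (p q : Fin 3 → ℝ) : ⟪p, q⟫ₘ = ⟪q, p⟫ₘ := by
  unfold minkowski; ring

theorem minkowski_smul_left (c : ℝ) (p q : Fin 3 → ℝ) : ⟪c • p, q⟫ₘ = c * ⟪p, q⟫ₘ := by
  simp only [minkowski, Pi.smul_apply, smul_eq_mul]; ring

theorem minkowski_smul_right (c : ℝ) (p q : Fin 3 → ℝ) : ⟪p, c • q⟫ₘ = c * ⟪p, q⟫ₘ := by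
  simp only [minkowski, Pi.smul_apply, smul_eq_mul]; ring

theorem minkowski_gram_det_nonpos (a b c : Fin 3 → ℝ) :
    ⟪a, a⟫ₘ * (⟪b, b⟫ₘ * ⟪c, c⟫ₘ - ⟪b, c⟫ₘ ^ 2) - ⟪a, b⟫ₘ * (⟪a, b⟫ₘ * ⟪c, c⟫ₘ - ⟪b, c⟫ₘ * ⟪a, c⟫ₘ)
      + ⟪a, c⟫ₘ * (⟪a, b⟫ₘ * ⟪b, c⟫ₘ - ⟪b, b⟫ₘ * ⟪a, c⟫ₘ) ≤ 0 := by
  calc _ = -(Matrix.of ![a, b, c]).det ^ 2 := by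
        simp only [minkowski, Matrix.det_fin_three, Matrix.of_apply, Matrix.cons_val',
          Matrix.cons_val_fin_one, Matrix.cons_val_zero, Matrix.cons_val_one, Matrix.cons_val]
        ring
    _ ≤ 0 := neg_nonpos.2 (sq_nonneg _)

theorem minkowski_self_nonneg_of_orthogonal {a p : Fin 3 → ℝ} (hp : ⟪p, p⟫ₘ = -1)
    (hap : ⟪a, p⟫ₘ = 0) : 0 ≤ ⟪a, a⟫ₘ := by
  have h : ⟪a, a⟫ₘ * (1 + p 2 ^ 2) = (a 0 * p 1 - a 1 * p 0) ^ 2 + a 2 ^ 2 := by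
    unfold minkowski at hp hap ⊢
    linear_combination (a 2 * p 2 + a 0 * p 1 + a 1 * p 0) * hap + (-2 * a 0 * a 1) * hp
  have hpos : 0 ≤ ⟪a, a⟫ₘ * (1 + p 2 ^ 2) := by rw [h]; positivity
  exact nonneg_of_mul_nonneg_left hpos (by positivity)

theorem sq_minkowski_le {p q a b : Fin 3 → ℝ} (hp : ⟪p, p⟫ₘ = -1) (hq : ⟪q, q⟫ₘ = -1)
    (hap : ⟪a, p⟫ₘ = 0) (hbq : ⟪b, q⟫ₘ = 0) :
    ⟪a, b⟫ₘ ^ 2 ≤ ⟪a, a⟫ₘ * ⟪b, b⟫ₘ * ⟪p, q⟫ₘ ^ 2 := by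
  have h₁ := minkowski_gram_det_nonpos a b p
  have h₂ := minkowski_gram_det_nonpos b p q
  rw [hp, hap] at h₁
  rw [hp, hq, hbq] at h₂
  have h₂' : ⟪b, p⟫ₘ ^ 2 ≤ ⟪b, b⟫ₘ * (⟪p, q⟫ₘ ^ 2 - 1) := by linarith
  have := mul_le_mul_of_nonneg_left h₂' (minkowski_self_nonneg_of_orthogonal hp hap)
  linarith

theorem mul_neg_minkowski_sub_one {p q : Fin 3 → ℝ} (hp : ⟪p, p⟫ₘ = -1) (hq : ⟪q, q⟫ₘ = -1) :
    2 * p 0 * q 0 * (-⟪p, q⟫ₘ - 1) = (q 0 * p 2 - p 0 * q 2) ^ 2 + (q 0 - p 0) ^ 2 := by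
  unfold minkowski at *
  linear_combination (-q 0 ^ 2) * hp + (-p 0 ^ 2) * hq

theorem one_le_neg_minkowski {p q : Fin 3 → ℝ} (hp : ⟪p, p⟫ₘ = -1) (hq : ⟪q, q⟫ₘ = -1)
    (hp₀ : 0 < p 0) (hq₀ : 0 < q 0) : 1 ≤ -⟪p, q⟫ₘ := by
  have h := mul_neg_minkowski_sub_one hp hq
  have : 0 ≤ 2 * p 0 * q 0 * (-⟪p, q⟫ₘ - 1) := by rw [h]; positivity
  linarith [nonneg_of_mul_nonneg_right this (by positivity)]

theorem eq_of_neg_minkowski_le_one {p q : Fin 3 → ℝ} (hp : ⟪p, p⟫ₘ = -1) (hq : ⟪q, q⟫ₘ = -1)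
    (hp₀ : 0 < p 0) (hq₀ : 0 < q 0) (hle : -⟪p, q⟫ₘ ≤ 1) : p = q := by
  have h : (q 0 * p 2 - p 0 * q 2) ^ 2 + (q 0 - p 0) ^ 2 ≤ 0 := by
    rw [← mul_neg_minkowski_sub_one hp hq]
    exact mul_nonpos_of_nonneg_of_nonpos (by positivity) (by linarith)
  have h₀ : q 0 = p 0 := by nlinarith [sq_nonneg (q 0 * p 2 - p 0 * q 2), sq_nonneg (q 0 - p 0)]
  have h₂ : p 2 = q 2 := by
    have : q 0 * p 2 - p 0 * q 2 = 0 := by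
      nlinarith [sq_nonneg (q 0 * p 2 - p 0 * q 2), sq_nonneg (q 0 - p 0)]
    rw [h₀, ← mul_sub] at this
    linarith [(mul_eq_zero.1 this).resolve_left hp₀.ne']
  have h₁ : p 1 = q 1 := by
    unfold minkowski at hp hq
    rw [h₀, ← h₂] at hq
    nlinarith
  funext i
  fin_cases i
  exacts [h₀.symm, h₁, h₂]

theorem two_mul_minkowski_le {p q a b : Fin 3 → ℝ} (hp : ⟪p, p⟫ₘ = -1) (hq : ⟪q, q⟫ₘ = -1)
    (hp₀ : 0 < p 0) (hq₀ : 0 < q 0) (hap : ⟪a, p⟫ₘ = 0) (hbq : ⟪b, q⟫ₘ = 0) :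
    2 * ⟪a, b⟫ₘ ≤ (⟪a, a⟫ₘ + ⟪b, b⟫ₘ) * -⟪p, q⟫ₘ := by
  have hc := one_le_neg_minkowski hp hq hp₀ hq₀
  have ha := minkowski_self_nonneg_of_orthogonal hp hap
  have hb := minkowski_self_nonneg_of_orthogonal hq hbq
  have hsq := sq_minkowski_le hp hq hap hbq
  refine abs_le_of_sq_le_sq' ?_ (by positivity) |>.2
  nlinarith [sq_nonneg (⟪a, a⟫ₘ - ⟪b, b⟫ₘ), sq_nonneg ⟪p, q⟫ₘ]

theorem HasDerivAt.minkowski {P R : ℝ → Fin 3 → ℝ} {P' R' : Fin 3 → ℝ} {t : ℝ}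
    (hP : HasDerivAt P P' t) (hR : HasDerivAt R R' t) :
    HasDerivAt (fun s => ⟪P s, R s⟫ₘ) (⟪P', R t⟫ₘ + ⟪P t, R'⟫ₘ) t := by
  have hP' := hasDerivAt_pi.1 hP
  have hR' := hasDerivAt_pi.1 hR
  exact (((hP' 2).mul (hR' 2)).sub (((hP' 0).mul (hR' 1)).add ((hP' 1).mul (hR' 0)))).congr_deriv
    (by simp only [_root_.minkowski]; ring)

/-- `P'` is the velocity of `P`, and the acceleration `⟪P', P'⟫ • P` is normal to the
hyperboloid. -/
structure IsHyperboloidGeodesicOn (P P' : ℝ → Fin 3 → ℝ) (a b : ℝ) : Prop where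
  continuousOn : ContinuousOn P (Icc a b)
  minkowski_self : ∀ t ∈ Icc a b, ⟪P t, P t⟫ₘ = -1
  pos : ∀ t ∈ Icc a b, 0 < P t 0
  hasDerivAt : ∀ t ∈ Ioo a b, HasDerivAt P (P' t) t
  hasDerivAt_velocity : ∀ t ∈ Ioo a b, HasDerivAt P' (⟪P' t, P' t⟫ₘ • P t) t

namespace IsHyperboloidGeodesicOn

variable {P P' R R' : ℝ → Fin 3 → ℝ} {a b : ℝ}

theorem minkowski_velocity (hP : IsHyperboloidGeodesicOn P P' a b) {t : ℝ} (ht : t ∈ Ioo a b) :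
    ⟪P' t, P t⟫ₘ = 0 := by
  have hderiv := (hP.hasDerivAt t ht).minkowski (hP.hasDerivAt t ht)
  have hconst : (fun s => ⟪P s, P s⟫ₘ) =ᶠ[nhds t] fun _ => -1 :=
    Filter.eventually_of_mem (Icc_mem_nhds ht.1 ht.2) hP.minkowski_self
  have h := hderiv.unique ((hasDerivAt_const t (-1 : ℝ)).congr_of_eventuallyEq hconst)
  rw [minkowski_comm (P t)] at h
  linarith

theorem convexOn_neg_minkowski (hP : IsHyperboloidGeodesicOn P P' a b)
    (hR : IsHyperboloidGeodesicOn R R' a b) : ConvexOn ℝ (Icc a b) fun t => -⟪P t, R t⟫ₘ := by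
  have hcont : ContinuousOn (fun t => -⟪P t, R t⟫ₘ) (Icc a b) := by
    have hP' := continuousOn_pi.1 hP.continuousOn
    have hR' := continuousOn_pi.1 hR.continuousOn
    unfold minkowski
    fun_prop
  refine convexOn_of_hasDerivWithinAt2_nonneg (convex_Icc a b) hcont
    (f' := fun t => -(⟪P' t, R t⟫ₘ + ⟪P t, R' t⟫ₘ))
    (f'' := fun t => -((⟪⟪P' t, P' t⟫ₘ • P t, R t⟫ₘ + ⟪P' t, R' t⟫ₘ)
      + (⟪P' t, R' t⟫ₘ + ⟪P t, ⟪R' t, R' t⟫ₘ • R t⟫ₘ))) ?_ ?_ ?_ <;>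
    rw [interior_Icc] <;> intro t ht
  · exact ((hP.hasDerivAt t ht).minkowski (hR.hasDerivAt t ht)).neg.hasDerivWithinAt
  · exact (((hP.hasDerivAt_velocity t ht).minkowski (hR.hasDerivAt t ht)).add
      ((hP.hasDerivAt t ht).minkowski (hR.hasDerivAt_velocity t ht))).neg.hasDerivWithinAt
  · have hIcc := Ioo_subset_Icc_self ht
    have key := two_mul_minkowski_le (hP.minkowski_self t hIcc) (hR.minkowski_self t hIcc)
      (hP.pos t hIcc) (hR.pos t hIcc) (hP.minkowski_velocity ht) (hR.minkowski_velocity ht)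
    simp only [minkowski_smul_left, minkowski_smul_right]
    linarith

theorem eqOn_of_eq_of_eq (hP : IsHyperboloidGeodesicOn P P' a b)
    (hR : IsHyperboloidGeodesicOn R R' a b) (ha : P a = R a) (hb : P b = R b) :
    EqOn P R (Icc a b) := by
  intro t ht
  have hab : a ≤ b := ht.1.trans ht.2
  have hle := (hP.convexOn_neg_minkowski hR).le_on_segment (left_mem_Icc.2 hab)
    (right_mem_Icc.2 hab) (by rwa [segment_eq_Icc hab])
  simp only [← ha, ← hb, hP.minkowski_self a (left_mem_Icc.2 hab),
    hP.minkowski_self b (right_mem_Icc.2 hab), neg_neg, max_self] at hle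
  exact eq_of_neg_minkowski_le_one (hP.minkowski_self t ht) (hR.minkowski_self t ht)
    (hP.pos t ht) (hR.pos t ht) hle

end IsHyperboloidGeodesicOn

/-- An isometry from `ℝ²` with the hyperbolic metric `dy² + e^{2y} dx²` onto the future sheet of
the hyperboloid. -/
noncomputable def hyperboloidPoint (x y : ℝ) : Fin 3 → ℝ :=
  ![exp y, (exp (-y) + x ^ 2 * exp y) / 2, x * exp y]

noncomputable def hyperboloidVelocity (x y u v : ℝ) : Fin 3 → ℝ :=
  ![v * exp y, (-v * exp (-y) + (2 * x * u + x ^ 2 * v) * exp y) / 2, (u + x * v) * exp y]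

theorem minkowski_hyperboloidPoint_self (x y : ℝ) :
    ⟪hyperboloidPoint x y, hyperboloidPoint x y⟫ₘ = -1 := by
  have h : exp y * exp (-y) = 1 := by rw [← exp_add, add_neg_cancel, exp_zero]
  simp only [minkowski, hyperboloidPoint, Matrix.cons_val, Matrix.cons_val_zero,
    Matrix.cons_val_one]
  linear_combination (-1) * h

theorem minkowski_hyperboloidVelocity_self (x y u v : ℝ) :
    ⟪hyperboloidVelocity x y u v, hyperboloidVelocity x y u v⟫ₘ = v ^ 2 + exp (2 * y) * u ^ 2 := by
  have h : exp y * exp (-y) = 1 := by rw [← exp_add, add_neg_cancel, exp_zero]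
  have h₂ : exp (2 * y) = exp y ^ 2 := by rw [← exp_nat_mul]; norm_num
  simp only [minkowski, hyperboloidVelocity, Matrix.cons_val, Matrix.cons_val_zero,
    Matrix.cons_val_one]
  linear_combination v ^ 2 * h - u ^ 2 * h₂

theorem hyperboloidPoint_injective {x y x' y' : ℝ}
    (h : hyperboloidPoint x y = hyperboloidPoint x' y') :
    x = x' ∧ y = y' := by
  have hy : y = y' := exp_injective (congrFun h 0)
  subst hy
  have hx := congrFun h 2
  simp only [hyperboloidPoint, Matrix.cons_val] at hx
  exact ⟨mul_right_cancel₀ (exp_ne_zero y) hx, rfl⟩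

/-- The hypotheses on `f, g, u, v` are the geodesic equations of `dy² + e^{2y} dx²`. -/
theorem isHyperboloidGeodesicOn_hyperboloidPoint {f g u v : ℝ → ℝ} {a b : ℝ}
    (hf : ContinuousOn f (Icc a b)) (hg : ContinuousOn g (Icc a b))
    (hf' : ∀ t ∈ Ioo a b, HasDerivAt f (u t) t) (hg' : ∀ t ∈ Ioo a b, HasDerivAt g (v t) t)
    (hu : ∀ t ∈ Ioo a b, HasDerivAt u (-2 * v t * u t) t)
    (hv : ∀ t ∈ Ioo a b, HasDerivAt v (exp (2 * g t) * u t ^ 2) t) :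
    IsHyperboloidGeodesicOn (fun t => hyperboloidPoint (f t) (g t))
      (fun t => hyperboloidVelocity (f t) (g t) (u t) (v t)) a b where
  continuousOn := by
    refine continuousOn_pi.2 fun i => ?_
    fin_cases i <;>
      simp only [hyperboloidPoint, Fin.zero_eta, Fin.mk_one, Fin.reduceFinMk, Matrix.cons_val_zero,
        Matrix.cons_val_one, Matrix.cons_val] <;>
      fun_prop
  minkowski_self t _ := minkowski_hyperboloidPoint_self _ _
  pos t _ := by simp [hyperboloidPoint, exp_pos]
  hasDerivAt t ht := by
    have hf := hf' t ht
    have hg := hg' t ht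
    refine hasDerivAt_pi.2 fun i => ?_
    fin_cases i <;>
      simp only [hyperboloidPoint, hyperboloidVelocity, Fin.zero_eta, Fin.mk_one, Fin.reduceFinMk,
        Matrix.cons_val_zero, Matrix.cons_val_one, Matrix.cons_val, neg_mul]
    · exact hg.exp.congr_deriv (mul_comm _ _)
    · exact (hg.fun_neg.exp.fun_add ((hf.fun_pow 2).fun_mul hg.exp)).div_const 2 |>.congr_deriv
        (by ring)
    · exact (hf.fun_mul hg.exp).congr_deriv (by ring)
  hasDerivAt_velocity t ht := by
    have hf := hf' t ht
    have hg := hg' t ht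
    have hu := hu t ht
    have hv := hv t ht
    have hexp : exp (2 * g t) * exp (-g t) = exp (g t) := by rw [← exp_add]; ring_nf
    rw [minkowski_hyperboloidVelocity_self]
    refine hasDerivAt_pi.2 fun i => ?_
    fin_cases i <;>
      simp only [hyperboloidPoint, hyperboloidVelocity, Fin.zero_eta, Fin.mk_one, Fin.reduceFinMk,
        Matrix.cons_val_zero, Matrix.cons_val_one, Matrix.cons_val, neg_mul, Pi.smul_apply,
        smul_eq_mul]
    · exact (hv.fun_mul hg.exp).congr_deriv (by ring)
    · refine ((hv.fun_mul hg.fun_neg.exp).fun_neg.fun_add ((((hf.const_mul 2).fun_mul hu).fun_add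
        ((hf.fun_pow 2).fun_mul hv)).fun_mul hg.exp)).div_const 2 |>.congr_deriv ?_
      linear_combination (-u t ^ 2) * hexp
    · exact (((hu.fun_add (hf.fun_mul hv)).fun_mul hg.exp)).congr_deriv (by ring)

theorem hasDerivAt_mul_deriv_of_deriv_eq_zero {φ ψ : ℝ → ℝ} {r : ℝ}
    (hψ : DifferentiableAt ℝ ψ r) (hφ' : DifferentiableAt ℝ (deriv φ) r)
    (h : deriv (fun x => x * exp (2 * ψ x) * deriv φ x) r = 0) :
    HasDerivAt (fun x => x * deriv φ x) (-2 * deriv ψ r * (r * deriv φ r)) r := by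
  have H := ((hasDerivAt_id' r).fun_mul (hψ.hasDerivAt.const_mul 2).exp).fun_mul hφ'.hasDerivAt
  rw [H.deriv] at h
  have h' : exp (2 * ψ r) * (deriv φ r + r * deriv (deriv φ) r + 2 * deriv ψ r * (r * deriv φ r))
      = 0 := by
    rw [← h]; ring
  have h'' := (mul_eq_zero.1 h').resolve_left (exp_ne_zero _)
  exact ((hasDerivAt_id' r).fun_mul hφ'.hasDerivAt).congr_deriv (by linarith)

theorem hasDerivAt_of_deriv_div_eq {F : ℝ → ℝ} {r c : ℝ} (hr : r ≠ 0) (hF : DifferentiableAt ℝ F r)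
    (h : deriv F r / r = c) : HasDerivAt F (r * c) r := by
  rw [← h, mul_div_cancel₀ _ hr]
  exact hF.hasDerivAt

theorem stationary_isHyperboloidGeodesicOn {R₁ R₂ : ℝ} (hR₁ : 0 < R₁) (hR₂ : 0 < R₂)
    {φ ψ : ℝ → ℝ} (hφ : ContDiffOn ℝ 2 φ (Icc R₁ R₂)) (hψ : ContDiffOn ℝ 2 ψ (Icc R₁ R₂))
    (heq1 : ∀ r ∈ Ioo R₁ R₂, deriv (fun x => x * exp (2 * ψ x) * deriv φ x) r = 0)
    (heq2 : ∀ r ∈ Ioo R₁ R₂,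
      deriv (fun x => x * deriv ψ x) r / r = exp (2 * ψ r) * deriv φ r ^ 2) :
    IsHyperboloidGeodesicOn (fun t => hyperboloidPoint (φ (exp t)) (ψ (exp t)))
      (fun t => hyperboloidVelocity (φ (exp t)) (ψ (exp t)) (exp t * deriv φ (exp t))
        (exp t * deriv ψ (exp t))) (log R₁) (log R₂) := by
  have hmaps : MapsTo exp (Icc (log R₁) (log R₂)) (Icc R₁ R₂) := fun t ht =>
    ⟨(exp_log hR₁).symm.le.trans (exp_le_exp.2 ht.1), (exp_le_exp.2 ht.2).trans (exp_log hR₂).le⟩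
  have hmaps' : MapsTo exp (Ioo (log R₁) (log R₂)) (Ioo R₁ R₂) := fun t ht =>
    ⟨(exp_log hR₁).symm.trans_lt (exp_lt_exp.2 ht.1), (exp_lt_exp.2 ht.2).trans_eq (exp_log hR₂)⟩
  have hdiff : ∀ t ∈ Ioo (log R₁) (log R₂),
      DifferentiableAt ℝ φ (exp t) ∧ DifferentiableAt ℝ ψ (exp t) ∧
      DifferentiableAt ℝ (deriv φ) (exp t) ∧ DifferentiableAt ℝ (deriv ψ) (exp t) := by
    intro t ht
    have hr := hmaps' ht
    have hφr := hφ.contDiffAt (Icc_mem_nhds hr.1 hr.2)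
    have hψr := hψ.contDiffAt (Icc_mem_nhds hr.1 hr.2)
    exact ⟨hφr.differentiableAt (by norm_num), hψr.differentiableAt (by norm_num),
      (hφr.derivWithin (m := 1) (by norm_num)).differentiableAt one_ne_zero,
      (hψr.derivWithin (m := 1) (by norm_num)).differentiableAt one_ne_zero⟩
  refine isHyperboloidGeodesicOn_hyperboloidPoint
    (hφ.continuousOn.comp continuous_exp.continuousOn hmaps)
    (hψ.continuousOn.comp continuous_exp.continuousOn hmaps) ?_ ?_ ?_ ?_ <;> intro t ht <;>
    obtain ⟨dφ, dψ, ddφ, ddψ⟩ := hdiff t ht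
  · exact (dφ.hasDerivAt.comp t (hasDerivAt_exp t)).congr_deriv (mul_comm _ _)
  · exact (dψ.hasDerivAt.comp t (hasDerivAt_exp t)).congr_deriv (mul_comm _ _)
  · exact ((hasDerivAt_mul_deriv_of_deriv_eq_zero dψ ddφ (heq1 _ (hmaps' ht))).comp t
      (hasDerivAt_exp t)).congr_deriv (by ring)
  · exact ((hasDerivAt_of_deriv_div_eq (exp_ne_zero t)
      (differentiableAt_id.mul ddψ) (heq2 _ (hmaps' ht))).comp t
      (hasDerivAt_exp t)).congr_deriv (by ring)

theorem stationary_uniqueness_general (R₁ R₂ a b c : ℝ) (hR₁ : 0 < R₁) (hR₁₂ : R₁ < R₂)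
    (φ₁ ψ₁ φ₂ ψ₂ : ℝ → ℝ)
    (hφ₁ : ContDiffOn ℝ 2 φ₁ (Set.Icc R₁ R₂)) (hψ₁ : ContDiffOn ℝ 2 ψ₁ (Set.Icc R₁ R₂))
    (hφ₂ : ContDiffOn ℝ 2 φ₂ (Set.Icc R₁ R₂)) (hψ₂ : ContDiffOn ℝ 2 ψ₂ (Set.Icc R₁ R₂))
    (heq1₁ : ∀ r ∈ Set.Ioo R₁ R₂,
      deriv (fun x => x * Real.exp (2 * ψ₁ x) * deriv φ₁ x) r = 0)
    (heq2₁ : ∀ r ∈ Set.Ioo R₁ R₂,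
      deriv (fun x => x * deriv ψ₁ x) r / r = Real.exp (2 * ψ₁ r) * (deriv φ₁ r) ^ 2)
    (heq1₂ : ∀ r ∈ Set.Ioo R₁ R₂,
      deriv (fun x => x * Real.exp (2 * ψ₂ x) * deriv φ₂ x) r = 0)
    (heq2₂ : ∀ r ∈ Set.Ioo R₁ R₂,
      deriv (fun x => x * deriv ψ₂ x) r / r = Real.exp (2 * ψ₂ r) * (deriv φ₂ r) ^ 2)
    (hbφ₁ : φ₁ R₁ = 0) (hbφ₂ : φ₁ R₂ = a) (hbψ₁ : ψ₁ R₁ = b) (hbψ₂ : ψ₁ R₂ = c)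
    (hbφ₁' : φ₂ R₁ = 0) (hbφ₂' : φ₂ R₂ = a) (hbψ₁' : ψ₂ R₁ = b) (hbψ₂' : ψ₂ R₂ = c) :
    ∀ r ∈ Set.Icc R₁ R₂, φ₁ r = φ₂ r ∧ ψ₁ r = ψ₂ r := by
  have hR₂ : 0 < R₂ := hR₁.trans hR₁₂
  have h₁ := stationary_isHyperboloidGeodesicOn hR₁ hR₂ hφ₁ hψ₁ heq1₁ heq2₁
  have h₂ := stationary_isHyperboloidGeodesicOn hR₁ hR₂ hφ₂ hψ₂ heq1₂ heq2₂
  have heq := h₁.eqOn_of_eq_of_eq h₂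
    (by simp only [exp_log hR₁, hbφ₁, hbψ₁, hbφ₁', hbψ₁'])
    (by simp only [exp_log hR₂, hbφ₂, hbψ₂, hbφ₂', hbψ₂'])
  intro r hr
  have hr₀ : 0 < r := hR₁.trans_le hr.1
  have hP := heq ⟨log_le_log hR₁ hr.1, log_le_log hr₀ hr.2⟩
  simp only [exp_log hr₀] at hP
  exact hyperboloidPoint_injective hP

/-- Uniqueness for the stationary two-point problem: two `C²` solutions of the
stationary Einstein–Rosen system with the same boundary data coincide. -/
theorem stationary_uniqueness (R₁ R₂ a b c : ℝ) (hR₁ : 0 < R₁) (hR₁₂ : R₁ < R₂)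
    (ha : 0 < a) (φ₁ ψ₁ φ₂ ψ₂ : ℝ → ℝ)
    (hφ₁ : ContDiffOn ℝ 2 φ₁ (Set.Icc R₁ R₂)) (hψ₁ : ContDiffOn ℝ 2 ψ₁ (Set.Icc R₁ R₂))
    (hφ₂ : ContDiffOn ℝ 2 φ₂ (Set.Icc R₁ R₂)) (hψ₂ : ContDiffOn ℝ 2 ψ₂ (Set.Icc R₁ R₂))
    (heq1₁ : ∀ r ∈ Set.Ioo R₁ R₂,
      deriv (fun x => x * Real.exp (2 * ψ₁ x) * deriv φ₁ x) r = 0)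
    (heq2₁ : ∀ r ∈ Set.Ioo R₁ R₂,
      deriv (fun x => x * deriv ψ₁ x) r / r = Real.exp (2 * ψ₁ r) * (deriv φ₁ r) ^ 2)
    (heq1₂ : ∀ r ∈ Set.Ioo R₁ R₂,
      deriv (fun x => x * Real.exp (2 * ψ₂ x) * deriv φ₂ x) r = 0)
    (heq2₂ : ∀ r ∈ Set.Ioo R₁ R₂,
      deriv (fun x => x * deriv ψ₂ x) r / r = Real.exp (2 * ψ₂ r) * (deriv φ₂ r) ^ 2)
    (hbφ₁ : φ₁ R₁ = 0) (hbφ₂ : φ₁ R₂ = a) (hbψ₁ : ψ₁ R₁ = b) (hbψ₂ : ψ₁ R₂ = c)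
    (hbφ₁' : φ₂ R₁ = 0) (hbφ₂' : φ₂ R₂ = a) (hbψ₁' : ψ₂ R₁ = b) (hbψ₂' : ψ₂ R₂ = c) :
    ∀ r ∈ Set.Icc R₁ R₂, φ₁ r = φ₂ r ∧ ψ₁ r = ψ₂ r :=
  stationary_uniqueness_general R₁ R₂ a b c hR₁ hR₁₂ φ₁ ψ₁ φ₂ ψ₂ hφ₁ hψ₁ hφ₂ hψ₂ heq1₁ heq2₁ heq1₂
    heq2₂ hbφ₁ hbφ₂ hbψ₁ hbψ₂ hbφ₁' hbφ₂' hbψ₁' hbψ₂'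
end
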